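/- arXiv:2406.07552 — 12 statements merged into one kernel-verified Lean document; each statement's English description precedes it below -/
import Mathlib

section
/- Let ((g,[2]),D) be a ResLieDer pair over F and (V,ρ,η) a restricted representation of it. Define on the direct sum g ⊕ V the bracket [x+u, y+v]_ρ = [x,y] + ρ(x)(v) + ρ(y)(u), the map (x+u)^[2]_ρ = x^[2] + ρ(x)(u), and the linear map (D+η)(x+u) = D(x) + η(u) for x,y ∈ g, u,v ∈ V. Then (g ⊕ V, [·,·]_ρ) is a Lie algebra over F, [2]_ρ is a 2-mapping on it, and D+η is a restricted derivation of (g ⊕ V,[2]_ρ); that is, ((g ⊕ V,[2]_ρ), D+η) is a ResLieDer pair (the semidirect product of ((g,[2]),D) by (V,ρ,η)). -/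
/-- the semidirect product of a ResLieDer pair `((g,[2]),D)` by a restricted
representation `(V, ρ, η)` is a ResLieDer pair. -/
theorem stmt0
    {F : Type*} [Field F] [CharP F 2]
    {g : Type*} [LieRing g] [LieAlgebra F g]
    {V : Type*} [AddCommGroup V] [Module F V]
    -- the 2-mapping on g
    (sq : g → g)
    (hsq_ad : ∀ x y : g, ⁅sq x, y⁆ = ⁅x, ⁅x, y⁆⁆)
    (hsq_smul : ∀ (a : F) (x : g), sq (a • x) = a ^ 2 • sq x)
    (hsq_add : ∀ x y : g, sq (x + y) = sq x + sq y + ⁅x, y⁆)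
    -- the restricted derivation D
    (D : g →ₗ[F] g)
    (hD_br : ∀ x y : g, D ⁅x, y⁆ = ⁅D x, y⁆ + ⁅x, D y⁆)
    (hD_sq : ∀ x : g, D (sq x) = ⁅x, D x⁆)
    -- the restricted representation (V, ρ, η)
    (ρ : g →ₗ[F] Module.End F V)
    (hρ_br : ∀ x y : g, ρ ⁅x, y⁆ = ρ x * ρ y - ρ y * ρ x)
    (hρ_sq : ∀ x : g, ρ (sq x) = ρ x * ρ x)
    (η : Module.End F V)
    (hη : ∀ x : g, η * ρ x = ρ (D x) + ρ x * η) :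
    -- the semidirect product structure on g ⊕ V
    let br : g × V → g × V → g × V := fun p q => (⁅p.1, q.1⁆, ρ p.1 q.2 + ρ q.1 p.2)
    let sqρ : g × V → g × V := fun p => (sq p.1, ρ p.1 p.2)
    let Dη : g × V → g × V := fun p => (D p.1, η p.2)
    -- (g ⊕ V, br) is a Lie algebra over F:
    ((∀ (a : F) (p p' q : g × V), br (a • p + p') q = a • br p q + br p' q) ∧
     (∀ (a : F) (p q q' : g × V), br p (a • q + q') = a • br p q + br p q') ∧
     (∀ p : g × V, br p p = 0) ∧
     (∀ p q r : g × V, br p (br q r) + br q (br r p) + br r (br p q) = 0)) ∧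
    -- sqρ is a 2-mapping on (g ⊕ V, br):
    ((∀ p q : g × V, br (sqρ p) q = br p (br p q)) ∧
     (∀ (a : F) (p : g × V), sqρ (a • p) = a ^ 2 • sqρ p) ∧
     (∀ p q : g × V, sqρ (p + q) = sqρ p + sqρ q + br p q)) ∧
    -- Dη is a restricted derivation of (g ⊕ V, br, sqρ):
    ((∀ (a : F) (p p' : g × V), Dη (a • p + p') = a • Dη p + Dη p') ∧
     (∀ p q : g × V, Dη (br p q) = br (Dη p) q + br p (Dη q)) ∧
     (∀ p : g × V, Dη (sqρ p) = br p (Dη p))) := by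
  intro br sqρ Dη
  have h2F : (2 : F) = 0 := by
    have := CharP.cast_eq_zero F 2
    simpa using this
  have hV : ∀ v : V, v + v = 0 := by
    intro v
    rw [← two_smul F v, h2F, zero_smul]
  have hVneg : ∀ v : V, -v = v := fun v => neg_eq_of_add_eq_zero_left (hV v)
  have h2n : ∀ v : V, (2 : ℕ) • v = 0 := fun v => by rw [two_nsmul]; exact hV v
  have h2z : ∀ v : V, (2 : ℤ) • v = 0 := fun v => by rw [two_zsmul]; exact hV v
  refine ⟨⟨?_, ?_, ?_, ?_⟩, ⟨?_, ?_, ?_⟩, ⟨?_, ?_, ?_⟩⟩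
  · intro a p p' q
    simp only [br, Prod.smul_fst, Prod.smul_snd, Prod.fst_add, Prod.snd_add, Prod.smul_mk,
      Prod.mk_add_mk, add_lie, smul_lie, map_add, map_smul, LinearMap.add_apply,
      LinearMap.smul_apply, smul_add]
    rw [Prod.mk.injEq]
    exact ⟨rfl, by abel⟩
  · intro a p q q'
    simp only [br, Prod.smul_fst, Prod.smul_snd, Prod.fst_add, Prod.snd_add, Prod.smul_mk,
      Prod.mk_add_mk, lie_add, lie_smul, map_add, map_smul, LinearMap.add_apply,
      LinearMap.smul_apply, smul_add]
    rw [Prod.mk.injEq]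
    exact ⟨rfl, by abel⟩
  · intro p
    simp only [br, lie_self, hV, Prod.mk_eq_zero, and_self]
  · intro p q r
    simp only [br, Prod.mk_add_mk, Prod.mk_eq_zero, hρ_br, map_add, LinearMap.add_apply,
      LinearMap.sub_apply, Module.End.mul_apply, sub_eq_add_neg, hVneg,
      LinearMap.smul_apply, LinearMap.neg_apply, neg_smul, one_smul, neg_neg]
    refine ⟨lie_jacobi _ _ _, ?_⟩
    abel_nf
    simp only [h2n, h2z, smul_zero, add_zero, zero_add]
    try abel
  · intro p q
    simp only [br, sqρ, hsq_ad, hρ_sq, hρ_br, map_add, LinearMap.add_apply, LinearMap.sub_apply,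
      Module.End.mul_apply, sub_eq_add_neg, hVneg, Prod.mk.injEq, true_and,
      LinearMap.smul_apply, LinearMap.neg_apply, neg_smul, one_smul, neg_neg]
    abel_nf
    simp only [h2n, h2z, smul_zero, add_zero, zero_add]
    try abel
  · intro a p
    simp only [sqρ, Prod.smul_fst, Prod.smul_snd, hsq_smul, map_smul, LinearMap.smul_apply,
      Prod.smul_mk, smul_smul, ← pow_two]
  · intro p q
    simp only [sqρ, br, Prod.fst_add, Prod.snd_add, hsq_add, map_add, LinearMap.add_apply,
      Prod.mk_add_mk, Prod.mk.injEq, true_and]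
    abel
  · intro a p p'
    simp only [Dη, Prod.smul_fst, Prod.smul_snd, Prod.fst_add, Prod.snd_add, map_add, map_smul,
      Prod.smul_mk, Prod.mk_add_mk]
  · intro p q
    have h1 := hη p.1
    have h2 := hη q.1
    simp only [Dη, br, hD_br, Prod.mk_add_mk, Prod.mk.injEq, true_and]
    have e1 : η (ρ p.1 q.2) = ρ (D p.1) q.2 + ρ p.1 (η q.2) := by
      have := congrArg (fun f => f q.2) h1; simpa using this
    have e2 : η (ρ q.1 p.2) = ρ (D q.1) p.2 + ρ q.1 (η p.2) := by
      have := congrArg (fun f => f p.2) h2; simpa using this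
    rw [map_add, e1, e2]; abel
  · intro p
    simp only [Dη, sqρ, br, hD_sq, Prod.mk.injEq, true_and]
    have := congrArg (fun f => f p.2) (hη p.1)
    simp only [Module.End.mul_apply, LinearMap.add_apply] at this
    rw [this]; abel
end

section
/- Let ((g,[2]),D) be a ResLieDer pair over F and (V,ρ,η) a restricted representation of it. Then for every F-linear map φ : g → V and every x ∈ g, ω_{δφ}(x) = η(ω_φ(x)) + (d¹φ)(x, D(x)); explicitly, (δφ)(x^[2]) + ρ(x)((δφ)(x)) = η(φ(x^[2]) + ρ(x)(φ(x))) + φ([x,D(x)]) + ρ(x)(φ(D(x))) + ρ(D(x))(φ(x)). In other words, δ(ω_φ) = ω_{δφ}, where δ is applied to the 2-cochain (d¹φ, ω_φ). -/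
/-- for a ResLieDer pair `((g,[2]),D)` with restricted representation
`(V,ρ,η)` and any linear map `φ : g → V`, one has `ω_{δφ} = δ(ω_φ)`, i.e.
`(δφ)(x^[2]) + ρ(x)((δφ)(x)) = η(ω_φ(x)) + (d¹φ)(x,D(x))`. -/
theorem stmt1
    {F : Type*} [Field F] [CharP F 2]
    {g : Type*} [LieRing g] [LieAlgebra F g]
    {V : Type*} [AddCommGroup V] [Module F V]
    (sq : g → g)
    (hsq_ad : ∀ x y : g, ⁅sq x, y⁆ = ⁅x, ⁅x, y⁆⁆)
    (hsq_smul : ∀ (a : F) (x : g), sq (a • x) = a ^ 2 • sq x)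
    (hsq_add : ∀ x y : g, sq (x + y) = sq x + sq y + ⁅x, y⁆)
    (D : g →ₗ[F] g)
    (hD_br : ∀ x y : g, D ⁅x, y⁆ = ⁅D x, y⁆ + ⁅x, D y⁆)
    (hD_sq : ∀ x : g, D (sq x) = ⁅x, D x⁆)
    (ρ : g →ₗ[F] Module.End F V)
    (hρ_br : ∀ x y : g, ρ ⁅x, y⁆ = ρ x * ρ y - ρ y * ρ x)
    (hρ_sq : ∀ x : g, ρ (sq x) = ρ x * ρ x)
    (η : Module.End F V)
    (hη : ∀ x : g, η * ρ x = ρ (D x) + ρ x * η)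
    (φ : g →ₗ[F] V) (x : g) :
    -- ω_{δφ}(x), where (δφ)(y) = η(φ(y)) + φ(D(y)):
    (η (φ (sq x)) + φ (D (sq x))) + ρ x (η (φ x) + φ (D x)) =
    -- η(ω_φ(x)) + (d¹φ)(x, D(x)):
      η (φ (sq x) + ρ x (φ x)) + (φ ⁅x, D x⁆ + ρ x (φ (D x)) + ρ (D x) (φ x)) := by
  have h1 : η (ρ x (φ x)) = ρ (D x) (φ x) + ρ x (η (φ x)) := by
    have := congrArg (fun f : Module.End F V => f (φ x)) (hη x)
    simpa using this
  rw [hD_sq x]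
  simp only [map_add, h1]
  have two : ∀ v : V, v + v = 0 := fun v => by
    have : (2 : F) • v = 0 := by
      rw [show (2:F) = 0 from by exact_mod_cast CharP.cast_eq_zero F 2]
      simp
    calc v + v = (2:F) • v := by rw [two_smul]
    _ = 0 := this
  abel_nf
  rw [two_zsmul, two ((ρ (D x)) (φ x)), add_zero]
end

section
/- Let ((g,[2]),D) be a ResLieDer pair over F and (V,ρ,η) a restricted representation of it. Then for every n ≥ 1 and every alternating F-multilinear map φ : gⁿ → V, δ(dⁿφ) = dⁿ(δφ) as maps gⁿ⁺¹ → V, where (dⁿφ)(z₁,…,z_{n+1}) = Σ_{1≤i≤n+1} ρ(z_i)(φ(z₁,…,ẑ_i,…,z_{n+1})) + Σ_{1≤i<j≤n+1} φ([z_i,z_j],z₁,…,ẑ_i,…,ẑ_j,…,z_{n+1}) and (δφ)(z₁,…,z_n) = η(φ(z₁,…,z_n)) + Σ_{1≤i≤n} φ(z₁,…,D(z_i),…,z_n). -/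
/-- The differential `dⁿ` on raw `n`-cochains (`n = m+1`), in characteristic 2:
`(dⁿφ)(z₁,…,z_{n+1}) = Σᵢ ρ(zᵢ)(φ(z₁,…,ẑᵢ,…,z_{n+1}))
  + Σ_{i<j} φ([zᵢ,zⱼ],z₁,…,ẑᵢ,…,ẑⱼ,…,z_{n+1})`. -/
def dOp {F : Type*} [Field F] {g : Type*} [LieRing g] [LieAlgebra F g]
    {V : Type*} [AddCommGroup V] [Module F V]
    (ρ : g →ₗ[F] Module.End F V) (m : ℕ)
    (φ : (Fin (m + 1) → g) → V) : (Fin (m + 2) → g) → V := fun z =>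
  (∑ i : Fin (m + 2), ρ (z i) (φ (i.removeNth z))) +
  ∑ i : Fin (m + 2), ∑ j : Fin (m + 2),
    if h : (i : ℕ) < (j : ℕ) then
      φ (Fin.cons ⁅z i, z j⁆
        ((⟨(i : ℕ), by have := j.isLt; omega⟩ : Fin (m + 1)).removeNth (j.removeNth z)))
    else 0

/-- The operator `δ` on raw `n`-cochains:
`(δφ)(z₁,…,zₙ) = η(φ(z₁,…,zₙ)) + Σᵢ φ(z₁,…,D(zᵢ),…,zₙ)`. -/
def deltaOp {F : Type*} [Field F] {g : Type*} [LieRing g] [LieAlgebra F g]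
    {V : Type*} [AddCommGroup V] [Module F V]
    (D : g →ₗ[F] g) (η : Module.End F V) (m : ℕ)
    (φ : (Fin m → g) → V) : (Fin m → g) → V := fun z =>
  η (φ z) + ∑ i : Fin m, φ (Function.update z i (D (z i)))

/-!
`δ` commutes separately with the `ρ`-part and with the bracket part of `dⁿ`. On the `ρ`-part,
`η ∘ ρ(zᵢ) = ρ(D zᵢ) + ρ(zᵢ) ∘ η`, and the extra `ρ(D zᵢ)` cancels, in characteristic 2, against
the term of `δ` in which `D` hits `zᵢ` itself. On the bracket part, `D` applied to the entry
`[zᵢ, zⱼ]` splits by the Leibniz rule into the terms in which `D` hits `zᵢ` or `zⱼ`, since `φ` is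
additive in its first argument.
-/

open Function

section

variable {F : Type*} [Field F] {g : Type*} [LieRing g] [LieAlgebra F g]
  {V : Type*} [AddCommGroup V] [Module F V]

def dOpAct (ρ : g →ₗ[F] Module.End F V) (m : ℕ) (φ : (Fin (m + 1) → g) → V) :
    (Fin (m + 2) → g) → V := fun z =>
  ∑ i : Fin (m + 2), ρ (z i) (φ (i.removeNth z))

def bracketMerge {m : ℕ} (i j : Fin (m + 2)) (hi : (i : ℕ) < m + 1) (z : Fin (m + 2) → g) :
    Fin (m + 1) → g :=
  Fin.cons ⁅z i, z j⁆ ((⟨i, hi⟩ : Fin (m + 1)).removeNth (j.removeNth z))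

def dOpBracket (m : ℕ) (φ : (Fin (m + 1) → g) → V) : (Fin (m + 2) → g) → V := fun z =>
  ∑ i : Fin (m + 2), ∑ j : Fin (m + 2),
    if h : (i : ℕ) < j then φ (bracketMerge i j (by have := j.isLt; omega) z) else 0

theorem dOp_eq_dOpAct_add_dOpBracket (ρ : g →ₗ[F] Module.End F V) (m : ℕ)
    (φ : (Fin (m + 1) → g) → V) :
    dOp ρ m φ = dOpAct ρ m φ + dOpBracket m φ :=
  rfl

theorem deltaOp_add (D : g →ₗ[F] g) (η : Module.End F V) (m : ℕ)
    (φ ψ : (Fin m → g) → V) :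
    deltaOp D η m (φ + ψ) = deltaOp D η m φ + deltaOp D η m ψ := by
  funext z
  simp only [deltaOp, Pi.add_apply, map_add, Finset.sum_add_distrib]
  abel

theorem deltaOp_dOpAct [CharP F 2] {D : g →ₗ[F] g} {η : Module.End F V}
    {ρ : g →ₗ[F] Module.End F V} (hη : ∀ x : g, η * ρ x = ρ (D x) + ρ x * η) (m : ℕ)
    (φ : (Fin (m + 1) → g) → V) :
    deltaOp D η (m + 2) (dOpAct ρ m φ) = dOpAct ρ m (deltaOp D η (m + 1) φ) := by
  funext z
  simp only [deltaOp, dOpAct, map_sum]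
  rw [Finset.sum_comm, ← Finset.sum_add_distrib]
  refine Finset.sum_congr rfl fun i _ => ?_
  rw [Fin.sum_univ_succAbove _ i, update_self, Fin.removeNth_update]
  simp only [update_of_ne (Fin.ne_succAbove i _), Fin.removeNth_update_succAbove]
  have hcancel : ρ (D (z i)) (φ (i.removeNth z)) + ρ (D (z i)) (φ (i.removeNth z)) = 0 := by
    rw [← two_smul F, CharTwo.two_eq_zero, zero_smul]
  rw [← Module.End.mul_apply, hη, LinearMap.add_apply, Module.End.mul_apply, add_add_add_comm,
    hcancel, zero_add, map_add, map_sum]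
  rfl

theorem bracketMerge_update_left {m : ℕ} {i j : Fin (m + 2)} (hij : i < j) (hi : (i : ℕ) < m + 1)
    (z : Fin (m + 2) → g) (x : g) :
    bracketMerge i j hi (update z i x) =
      Fin.cons ⁅x, z j⁆ ((⟨i, hi⟩ : Fin (m + 1)).removeNth (j.removeNth z)) := by
  have hsucc : j.succAbove ⟨i, hi⟩ = i := Fin.succAbove_of_castSucc_lt _ _ hij
  have hremove := Fin.removeNth_update_succAbove j ⟨i, hi⟩ x z
  rw [hsucc] at hremove
  rw [bracketMerge, update_self, update_of_ne hij.ne', hremove, Fin.removeNth_update]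

theorem bracketMerge_update_right {m : ℕ} {i j : Fin (m + 2)} (hij : i < j) (hi : (i : ℕ) < m + 1)
    (z : Fin (m + 2) → g) (x : g) :
    bracketMerge i j hi (update z j x) =
      Fin.cons ⁅z i, x⁆ ((⟨i, hi⟩ : Fin (m + 1)).removeNth (j.removeNth z)) := by
  rw [bracketMerge, update_self, update_of_ne hij.ne, Fin.removeNth_update]

theorem bracketMerge_update_succAbove {m : ℕ} {i j : Fin (m + 2)} (hij : i < j)
    (hi : (i : ℕ) < m + 1) (z : Fin (m + 2) → g) (l : Fin m) (x : g) :
    bracketMerge i j hi (update z (j.succAbove ((⟨i, hi⟩ : Fin (m + 1)).succAbove l)) x) =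
      Fin.cons ⁅z i, z j⁆
        (update ((⟨i, hi⟩ : Fin (m + 1)).removeNth (j.removeNth z)) l x) := by
  have hsucc : j.succAbove ⟨i, hi⟩ = i := Fin.succAbove_of_castSucc_lt _ _ hij
  have hi_ne : i ≠ j.succAbove ((⟨i, hi⟩ : Fin (m + 1)).succAbove l) := by
    conv_lhs => rw [← hsucc]
    exact Fin.succAbove_right_injective.ne (Fin.ne_succAbove _ l)
  rw [bracketMerge, update_of_ne hi_ne, update_of_ne (Fin.ne_succAbove j _),
    Fin.removeNth_update_succAbove, Fin.removeNth_update_succAbove]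

theorem sum_map_bracketMerge_update_derivation {D : g →ₗ[F] g}
    (hD_br : ∀ x y : g, D ⁅x, y⁆ = ⁅D x, y⁆ + ⁅x, D y⁆) {m : ℕ}
    (φ : MultilinearMap F (fun _ : Fin (m + 1) => g) V) {i j : Fin (m + 2)} (hij : i < j)
    (hi : (i : ℕ) < m + 1) (z : Fin (m + 2) → g) :
    ∑ k, φ (bracketMerge i j hi (update z k (D (z k)))) =
      ∑ l, φ (update (bracketMerge i j hi z) l (D (bracketMerge i j hi z l))) := by
  have hsucc : j.succAbove ⟨i, hi⟩ = i := Fin.succAbove_of_castSucc_lt _ _ hij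
  rw [Fin.sum_univ_succAbove _ j, Fin.sum_univ_succAbove _ ⟨i, hi⟩, hsucc,
    bracketMerge_update_right hij, bracketMerge_update_left hij, Fin.sum_univ_succ]
  simp only [bracketMerge_update_succAbove hij]
  simp only [bracketMerge, Fin.cons_zero, Fin.cons_succ, Fin.update_cons_zero, ← Fin.cons_update,
    hD_br, φ.cons_add]
  abel

theorem deltaOp_dOpBracket {D : g →ₗ[F] g} {η : Module.End F V}
    (hD_br : ∀ x y : g, D ⁅x, y⁆ = ⁅D x, y⁆ + ⁅x, D y⁆) {m : ℕ}
    (φ : MultilinearMap F (fun _ : Fin (m + 1) => g) V) :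
    deltaOp D η (m + 2) (dOpBracket m φ) = dOpBracket m (deltaOp D η (m + 1) φ) := by
  funext z
  simp only [deltaOp, dOpBracket, map_sum]
  conv_lhs => arg 2; rw [Finset.sum_comm]
  rw [← Finset.sum_add_distrib]
  refine Finset.sum_congr rfl fun i _ => ?_
  conv_lhs => arg 2; rw [Finset.sum_comm]
  rw [← Finset.sum_add_distrib]
  refine Finset.sum_congr rfl fun j _ => ?_
  by_cases hij : (i : ℕ) < j
  · simp only [dif_pos hij]
    rw [sum_map_bracketMerge_update_derivation hD_br φ hij]
  · simp only [dif_neg hij, map_zero, Finset.sum_const_zero, add_zero]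

end

theorem stmt2_general
    {F : Type*} [Field F] [CharP F 2]
    {g : Type*} [LieRing g] [LieAlgebra F g]
    {V : Type*} [AddCommGroup V] [Module F V]
    (D : g →ₗ[F] g)
    (hD_br : ∀ x y : g, D ⁅x, y⁆ = ⁅D x, y⁆ + ⁅x, D y⁆)
    (ρ : g →ₗ[F] Module.End F V)
    (η : Module.End F V)
    (hη : ∀ x : g, η * ρ x = ρ (D x) + ρ x * η)
    (m : ℕ) (φ : g [⋀^Fin (m + 1)]→ₗ[F] V) :
    deltaOp D η (m + 2) (dOp ρ m ⇑φ) = dOp ρ m (deltaOp D η (m + 1) ⇑φ) := by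
  rw [dOp_eq_dOpAct_add_dOpBracket, dOp_eq_dOpAct_add_dOpBracket, deltaOp_add,
    deltaOp_dOpAct hη]
  exact congrArg _ (deltaOp_dOpBracket hD_br φ.toMultilinearMap)

/-- for every `n ≥ 1` (here `n = m + 1`) and every alternating multilinear
map `φ : gⁿ → V`, `δ(dⁿφ) = dⁿ(δφ)`. -/
theorem stmt2
    {F : Type*} [Field F] [CharP F 2]
    {g : Type*} [LieRing g] [LieAlgebra F g]
    {V : Type*} [AddCommGroup V] [Module F V]
    (sq : g → g)
    (hsq_ad : ∀ x y : g, ⁅sq x, y⁆ = ⁅x, ⁅x, y⁆⁆)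
    (hsq_smul : ∀ (a : F) (x : g), sq (a • x) = a ^ 2 • sq x)
    (hsq_add : ∀ x y : g, sq (x + y) = sq x + sq y + ⁅x, y⁆)
    (D : g →ₗ[F] g)
    (hD_br : ∀ x y : g, D ⁅x, y⁆ = ⁅D x, y⁆ + ⁅x, D y⁆)
    (hD_sq : ∀ x : g, D (sq x) = ⁅x, D x⁆)
    (ρ : g →ₗ[F] Module.End F V)
    (hρ_br : ∀ x y : g, ρ ⁅x, y⁆ = ρ x * ρ y - ρ y * ρ x)
    (hρ_sq : ∀ x : g, ρ (sq x) = ρ x * ρ x)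
    (η : Module.End F V)
    (hη : ∀ x : g, η * ρ x = ρ (D x) + ρ x * η)
    (m : ℕ) (φ : g [⋀^Fin (m + 1)]→ₗ[F] V) :
    deltaOp D η (m + 2) (dOp ρ m ⇑φ) = dOp ρ m (deltaOp D η (m + 1) ⇑φ) :=
  stmt2_general D hD_br ρ η hη m φ
end

section
/- Let ((g,[2]),D) be a ResLieDer pair over F and (V,ρ,η) a restricted representation of it. Then for every k ≥ 3 and every k-cochain (φ_k,ω_k) with values in V, δ(d^kω_k) = d^k(δω_k) as maps g^k → V, where on the left δ is applied to the (k+1)-cochain (d^kφ_k, d^kω_k) and on the right the d^k-formula for the ω-component is applied to the k-cochain (δφ_k, δω_k). -/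
/-- The `ω`-component of the differential `d^k` of a `k`-cochain `(φ,ω)` where `k = m+3`;
the first argument of `ω` (the distinguished argument `x`) is separated out:
`(d^kω)(x,z₁,…,z_{k−1}) = ρ(x)(φ(x,z₁,…,z_{k−1})) + φ(x^{[2]},z₁,…,z_{k−1})
 + Σᵢ φ([x,zᵢ],x,z₁,…,ẑᵢ,…) + Σᵢ ρ(zᵢ)(ω(x,z₁,…,ẑᵢ,…))
 + Σ_{i<j} ω(x,[zᵢ,zⱼ],z₁,…,ẑᵢ,…,ẑⱼ,…)`. -/
def dOmegaOp {F : Type*} [Field F] {g : Type*} [LieRing g] [LieAlgebra F g]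
    {V : Type*} [AddCommGroup V] [Module F V]
    (ρ : g →ₗ[F] Module.End F V) (sq : g → g) (m : ℕ)
    (φ : (Fin (m + 3) → g) → V) (ω : g → (Fin (m + 1) → g) → V) :
    g → (Fin (m + 2) → g) → V := fun x z =>
  ρ x (φ (Fin.cons x z)) + φ (Fin.cons (sq x) z) +
  (∑ i : Fin (m + 2), φ (Fin.cons ⁅x, z i⁆ (Fin.cons x (i.removeNth z)))) +
  (∑ i : Fin (m + 2), ρ (z i) (ω x (i.removeNth z))) +
  ∑ i : Fin (m + 2), ∑ j : Fin (m + 2),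
    if h : (i : ℕ) < (j : ℕ) then
      ω x (Fin.cons ⁅z i, z j⁆
        ((⟨(i : ℕ), by have := j.isLt; omega⟩ : Fin (m + 1)).removeNth (j.removeNth z)))
    else 0

/-- The `ω`-component of the operator `δ` on a `k`-cochain `(φ,ω)`, `k = m'+2` where
`φ : g^{m'+2} → V` and `ω : g × g^{m'} → V`:
`(δω)(x,z₂,…,z_{k−1}) = η(ω(x,z₂,…)) + Σᵢ ω(x,…,D(zᵢ),…) + φ(x,D(x),z₂,…,z_{k−1})`. -/
def deltaOmegaOp {F : Type*} [Field F] {g : Type*} [LieRing g] [LieAlgebra F g]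
    {V : Type*} [AddCommGroup V] [Module F V]
    (D : g →ₗ[F] g) (η : Module.End F V) (m : ℕ)
    (φ : (Fin (m + 2) → g) → V) (ω : g → (Fin m → g) → V) :
    g → (Fin m → g) → V := fun x z =>
  η (ω x z) + (∑ i : Fin m, ω x (Function.update z i (D (z i)))) +
  φ (Fin.cons x (Fin.cons (D x) z))

/-!
Write `δ f (z) = η (f z) + ∑ᵢ f (z with zᵢ replaced by D zᵢ)` for the Leibniz-type operator on
functions of tuples (`deltaOp`). Apply `δ` to each of the five terms of `(d^k ω)(x, ·)` and compare
with the corresponding term of `d^k` on `(δφ, δω)`: `η ∘ ρ(x) = ρ(D x) + ρ(x) ∘ η` moves `η` past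
the representation, `D [a, b] = [D a, b] + [a, D b]` and `D (x^[2]) = [x, D x]` move `D` past
brackets and squares, and feeding `D` into one of the removed arguments reassembles the sum over
all arguments. The discrepancies are exactly the terms of `(d^k φ)(x, D x, z)` other than
`ρ(D x) φ(x, z)`, which occurs once more and cancels in characteristic `2`. Characteristic `2`
is used twice more: the two copies of `ρ(D zᵢ) ω(x, ẑᵢ)` cancel, and the alternating map `φ` is
invariant under every permutation of its arguments.
-/

open Finset Function

theorem neg_eq_self_of_charTwo (F : Type*) [Field F] [CharP F 2] {V : Type*} [AddCommGroup V]
    [Module F V] (v : V) : -v = v := by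
  rw [← one_smul F v, ← neg_smul, CharTwo.neg_eq]

theorem add_self_eq_zero_of_charTwo (F : Type*) [Field F] [CharP F 2] {V : Type*}
    [AddCommGroup V] [Module F V] (v : V) : v + v = 0 :=
  neg_eq_iff_add_eq_zero.mp (neg_eq_self_of_charTwo F v)

section CharTwo

variable (F : Type*) [Field F] [CharP F 2] {V : Type*} [AddCommGroup V] [Module F V]

theorem AlternatingMap.map_perm_of_charTwo {M ι : Type*} [AddCommGroup M] [Module F M]
    [Fintype ι] [DecidableEq ι] (f : M [⋀^ι]→ₗ[F] V) (v : ι → M) (σ : Equiv.Perm ι) :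
    f (v ∘ σ) = f v := by
  rw [f.map_perm]
  rcases Int.units_eq_one_or (Equiv.Perm.sign σ) with h | h <;>
    simp [h, neg_eq_self_of_charTwo F]

theorem AlternatingMap.map_cons_rotate_of_charTwo {M : Type*} [AddCommGroup M] [Module F M]
    {n : ℕ} (f : M [⋀^Fin (n + 3)]→ₗ[F] V) (a b c : M) (w : Fin n → M) :
    f (Fin.cons c (Fin.cons a (Fin.cons b w))) = f (Fin.cons a (Fin.cons b (Fin.cons c w))) := by
  rw [← f.map_perm_of_charTwo F _ (Fin.cycleRange 2), Fin.cons_comp_cycleRange,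
    show (2 : Fin (n + 3)) = (0 : Fin (n + 1)).succ.succ from rfl, Fin.insertNth_succ_cons,
    Fin.insertNth_succ_cons, Fin.insertNth_zero']

end CharTwo

theorem Fin.removeNth_succ_cons {α : Type*} {n : ℕ} (a : α) (w : Fin (n + 1) → α)
    (i : Fin (n + 1)) : i.succ.removeNth (Fin.cons a w : Fin (n + 2) → α) =
      Fin.cons a (i.removeNth w) := by
  ext s
  cases s using Fin.cases <;> simp [Fin.removeNth_apply, Fin.succ_succAbove_succ]

section Pairs

variable {α M : Type*} [AddCommMonoid M] {n : ℕ}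

def pairSum (G : ∀ i j : Fin (n + 2), (i : ℕ) < j → M) : M :=
  ∑ i : Fin (n + 2), ∑ j : Fin (n + 2), if h : (i : ℕ) < j then G i j h else 0

theorem pairSum_add (G H : ∀ i j : Fin (n + 2), (i : ℕ) < j → M) :
    pairSum (fun i j h => G i j h + H i j h) = pairSum G + pairSum H := by
  simp only [pairSum, ← sum_add_distrib]
  refine sum_congr rfl fun i _ => sum_congr rfl fun j _ => ?_
  split_ifs <;> simp

theorem pairSum_congr {G H : ∀ i j : Fin (n + 2), (i : ℕ) < j → M}
    (hGH : ∀ i j h, G i j h = H i j h) : pairSum G = pairSum H := by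
  simp only [pairSum, hGH]

theorem map_pairSum {N E : Type*} [AddCommMonoid N] [FunLike E M N] [AddMonoidHomClass E M N]
    (e : E) (G : ∀ i j : Fin (n + 2), (i : ℕ) < j → M) :
    e (pairSum G) = pairSum fun i j h => e (G i j h) := by
  simp only [pairSum, map_sum, apply_dite e, map_zero]

theorem sum_pairSum_comm {ι : Type*} [Fintype ι] (G : ι → ∀ i j : Fin (n + 2), (i : ℕ) < j → M) :
    ∑ s, pairSum (G s) = pairSum fun i j h => ∑ s, G s i j h := by
  simp only [pairSum]
  rw [sum_comm]
  refine sum_congr rfl fun i _ => ?_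
  rw [sum_comm]
  refine sum_congr rfl fun j _ => ?_
  split_ifs <;> simp

theorem pairSum_succ (G : ∀ i j : Fin (n + 3), (i : ℕ) < j → M) :
    pairSum G = ∑ j : Fin (n + 2), G 0 j.succ (by simp) +
      pairSum fun i j h => G i.succ j.succ (by simpa using h) := by
  simp only [pairSum]
  rw [Fin.sum_univ_succ, Fin.sum_univ_succ]
  simp [Fin.sum_univ_succ]

def Fin.succAbovePair (i j : Fin (n + 2)) (h : (i : ℕ) < j) (t : Fin n) : Fin (n + 2) :=
  j.succAbove ((⟨i, by have := j.isLt; omega⟩ : Fin (n + 1)).succAbove t)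

theorem Fin.succAbove_mk_of_lt (i j : Fin (n + 2)) (h : (i : ℕ) < j) :
    j.succAbove ⟨i, by have := j.isLt; omega⟩ = i :=
  Fin.succAbove_of_castSucc_lt _ _ (Fin.lt_def.mpr h)

theorem Fin.succAbovePair_ne_left (i j : Fin (n + 2)) (h : (i : ℕ) < j) (t : Fin n) :
    Fin.succAbovePair i j h t ≠ i := by
  conv_rhs => rw [← Fin.succAbove_mk_of_lt i j h]
  exact (Fin.succAbove_right_injective).ne (Fin.succAbove_ne _ t)

theorem Fin.succAbovePair_ne_right (i j : Fin (n + 2)) (h : (i : ℕ) < j) (t : Fin n) :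
    Fin.succAbovePair i j h t ≠ j :=
  Fin.succAbove_ne j _

theorem Fin.sum_univ_succAbovePair (H : Fin (n + 2) → M) (i j : Fin (n + 2)) (h : (i : ℕ) < j) :
    ∑ s, H s = H i + H j + ∑ t, H (Fin.succAbovePair i j h t) := by
  rw [Fin.sum_univ_succAbove H j, Fin.sum_univ_succAbove (fun t => H (j.succAbove t))
    ⟨i, by have := j.isLt; omega⟩, Fin.succAbove_mk_of_lt i j h, add_left_comm, add_assoc]
  rfl

def removeNthPair (i j : Fin (n + 2)) (h : (i : ℕ) < j) (z : Fin (n + 2) → α) : Fin n → α :=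
  (⟨i, by have := j.isLt; omega⟩ : Fin (n + 1)).removeNth (j.removeNth z)

theorem removeNthPair_update_left (i j : Fin (n + 2)) (h : (i : ℕ) < j) (z : Fin (n + 2) → α)
    (a : α) : removeNthPair i j h (update z i a) = removeNthPair i j h z := by
  calc removeNthPair i j h (update z i a)
      = removeNthPair i j h (update z (j.succAbove ⟨i, by have := j.isLt; omega⟩) a) := by
        rw [Fin.succAbove_mk_of_lt i j h]
    _ = removeNthPair i j h z := by
        simp only [removeNthPair, Fin.removeNth_update_succAbove, Fin.removeNth_update]

theorem removeNthPair_update_right (i j : Fin (n + 2)) (h : (i : ℕ) < j) (z : Fin (n + 2) → α)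
    (a : α) : removeNthPair i j h (update z j a) = removeNthPair i j h z := by
  simp only [removeNthPair, Fin.removeNth_update]

theorem removeNthPair_update_succAbovePair (i j : Fin (n + 2)) (h : (i : ℕ) < j)
    (z : Fin (n + 2) → α) (t : Fin n) (a : α) :
    removeNthPair i j h (update z (Fin.succAbovePair i j h t) a) =
      update (removeNthPair i j h z) t a := by
  simp only [removeNthPair, Fin.succAbovePair, Fin.removeNth_update_succAbove]

theorem removeNthPair_succ_succ_cons (i j : Fin (n + 2)) (h : (i.succ : ℕ) < j.succ) (a : α)
    (w : Fin (n + 2) → α) :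
    removeNthPair i.succ j.succ h (Fin.cons a w : Fin (n + 3) → α) =
      Fin.cons a (removeNthPair i j (Nat.succ_lt_succ_iff.mp h) w) := by
  simp only [removeNthPair, Fin.removeNth_succ_cons]
  exact Fin.removeNth_succ_cons (n := n) a _ ⟨i, _⟩

end Pairs

section Cochains

variable {F : Type*} [Field F] {g : Type*} [LieRing g] [LieAlgebra F g]
  {V : Type*} [AddCommGroup V] [Module F V] (D : g →ₗ[F] g) (η : Module.End F V) {n m : ℕ}

theorem dOp_apply (ρ : g →ₗ[F] Module.End F V) (f : (Fin (n + 3) → g) → V)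
    (z : Fin (n + 4) → g) :
    dOp ρ (n + 2) f z = ∑ i, ρ (z i) (f (i.removeNth z)) +
      pairSum fun i j h => f (Fin.cons ⁅z i, z j⁆ (removeNthPair i j h z)) :=
  rfl

theorem dOp_cons_cons (ρ : g →ₗ[F] Module.End F V) (f : (Fin (n + 3) → g) → V) (x y : g)
    (z : Fin (n + 2) → g) :
    dOp ρ (n + 2) f (Fin.cons x (Fin.cons y z)) =
      ρ x (f (Fin.cons y z)) + ρ y (f (Fin.cons x z)) +
      ∑ i, ρ (z i) (f (Fin.cons x (Fin.cons y (i.removeNth z)))) +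
      f (Fin.cons ⁅x, y⁆ z) +
      ∑ i, f (Fin.cons ⁅x, z i⁆ (Fin.cons y (i.removeNth z))) +
      ∑ i, f (Fin.cons ⁅y, z i⁆ (Fin.cons x (i.removeNth z))) +
      pairSum fun i j h =>
        f (Fin.cons ⁅z i, z j⁆ (Fin.cons x (Fin.cons y (removeNthPair i j h z)))) := by
  rw [dOp_apply, Fin.sum_univ_succ, Fin.sum_univ_succ (n := n + 2), pairSum_succ, pairSum_succ,
    Fin.sum_univ_succ (n := n + 2)]
  simp only [Fin.cons_zero, Fin.cons_succ, removeNthPair_succ_succ_cons, Fin.removeNth_zero,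
    Fin.tail_cons, Fin.removeNth_succ_cons]
  simp only [removeNthPair, Fin.removeNth_succ_cons, Fin.val_zero, Fin.zero_eta,
    Fin.removeNth_zero, Fin.tail_cons]
  abel

theorem dOmegaOp_eq_add (ρ : g →ₗ[F] Module.End F V) (sq : g → g)
    (φ : (Fin (m + 3) → g) → V) (ω : g → (Fin (m + 1) → g) → V) (x : g) :
    dOmegaOp ρ sq m φ ω x =
      (fun z => ρ x (φ (Fin.cons x z))) + (fun z => φ (Fin.cons (sq x) z)) +
      (fun z => ∑ i, φ (Fin.cons ⁅x, z i⁆ (Fin.cons x (i.removeNth z)))) +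
      (fun z => ∑ i, ρ (z i) (ω x (i.removeNth z))) +
      fun z => pairSum fun i j h => ω x (Fin.cons ⁅z i, z j⁆ (removeNthPair i j h z)) :=
  rfl

theorem dOmegaOp_apply (ρ : g →ₗ[F] Module.End F V) (sq : g → g)
    (φ : (Fin (m + 3) → g) → V) (ω : g → (Fin (m + 1) → g) → V) (x : g) (z : Fin (m + 2) → g) :
    dOmegaOp ρ sq m φ ω x z =
      ρ x (φ (Fin.cons x z)) + φ (Fin.cons (sq x) z) +
      ∑ i, φ (Fin.cons ⁅x, z i⁆ (Fin.cons x (i.removeNth z))) +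
      ∑ i, ρ (z i) (ω x (i.removeNth z)) +
      pairSum fun i j h => ω x (Fin.cons ⁅z i, z j⁆ (removeNthPair i j h z)) :=
  rfl

theorem deltaOmegaOp_apply (φ : (Fin (m + 2) → g) → V)
    (ω : g → (Fin m → g) → V) (x : g) (z : Fin m → g) :
    deltaOmegaOp D η m φ ω x z = deltaOp D η m (ω x) z + φ (Fin.cons x (Fin.cons (D x) z)) :=
  rfl

theorem deltaOp_add_s3 (f h : (Fin n → g) → V) (z : Fin n → g) :
    deltaOp D η n (f + h) z = deltaOp D η n f z + deltaOp D η n h z := by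
  simp only [deltaOp, Pi.add_apply, map_add, sum_add_distrib]
  abel

theorem deltaOp_cons (f : (Fin (n + 1) → g) → V) (a : g) (z : Fin n → g) :
    deltaOp D η (n + 1) f (Fin.cons a z) =
      deltaOp D η n (fun w => f (Fin.cons a w)) z + f (Fin.cons (D a) z) := by
  simp only [deltaOp, Fin.sum_univ_succ, Fin.cons_zero, Fin.cons_succ, Fin.update_cons_zero,
    ← Fin.cons_update]
  abel

theorem deltaOp_rho_comp (ρ : g →ₗ[F] Module.End F V)
    (hη : ∀ x : g, η * ρ x = ρ (D x) + ρ x * η) (a : g) (f : (Fin n → g) → V) (z : Fin n → g) :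
    deltaOp D η n (fun w => ρ a (f w)) z = ρ a (deltaOp D η n f z) + ρ (D a) (f z) := by
  simp only [deltaOp, map_add, map_sum, ← Module.End.mul_apply, hη, LinearMap.add_apply]
  abel

theorem deltaOp_sum_removeNth (G : Fin (n + 1) → g → (Fin n → g) → V) (z : Fin (n + 1) → g) :
    deltaOp D η (n + 1) (fun w => ∑ i, G i (w i) (i.removeNth w)) z =
      ∑ i, (G i (D (z i)) (i.removeNth z) + deltaOp D η n (G i (z i)) (i.removeNth z)) := by
  have hsplit (i : Fin (n + 1)) :
      ∑ s, G i (update z s (D (z s)) i) (i.removeNth (update z s (D (z s)))) =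
        G i (D (z i)) (i.removeNth z) +
          ∑ t, G i (z i) (update (i.removeNth z) t (D (i.removeNth z t))) := by
    rw [Fin.sum_univ_succAbove _ i, update_self, Fin.removeNth_update]
    congr 1
    refine sum_congr rfl fun t _ => ?_
    rw [update_of_ne (Fin.succAbove_ne i t).symm, Fin.removeNth_update_succAbove]
    rfl
  simp only [deltaOp, map_sum]
  rw [sum_comm]
  simp only [hsplit, sum_add_distrib]
  abel

theorem deltaOp_pairSum (G : Fin (n + 2) → Fin (n + 2) → g → g → (Fin n → g) → V)
    (z : Fin (n + 2) → g) :
    deltaOp D η (n + 2)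
        (fun w => pairSum fun i j h => G i j (w i) (w j) (removeNthPair i j h w)) z =
      pairSum fun i j h => G i j (D (z i)) (z j) (removeNthPair i j h z) +
        G i j (z i) (D (z j)) (removeNthPair i j h z) +
        deltaOp D η n (G i j (z i) (z j)) (removeNthPair i j h z) := by
  simp only [deltaOp, map_pairSum, sum_pairSum_comm, ← pairSum_add]
  refine pairSum_congr fun i j h => ?_
  have hij : i ≠ j := Fin.ne_of_val_ne h.ne
  rw [Fin.sum_univ_succAbovePair _ i j h]
  simp only [update_self, update_of_ne hij, update_of_ne hij.symm,
    removeNthPair_update_left, removeNthPair_update_right, removeNthPair_update_succAbovePair,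
    update_of_ne (Fin.succAbovePair_ne_left i j h _).symm,
    update_of_ne (Fin.succAbovePair_ne_right i j h _).symm]
  abel

theorem deltaOp_rho_cons (ρ : g →ₗ[F] Module.End F V)
    (hη : ∀ x : g, η * ρ x = ρ (D x) + ρ x * η) (f : (Fin (n + 1) → g) → V) (a : g)
    (z : Fin n → g) :
    deltaOp D η n (fun w => ρ a (f (Fin.cons a w))) z + ρ a (f (Fin.cons (D a) z)) =
      ρ a (deltaOp D η (n + 1) f (Fin.cons a z)) + ρ (D a) (f (Fin.cons a z)) := by
  rw [deltaOp_rho_comp D η ρ hη, deltaOp_cons, map_add]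
  abel

theorem deltaOp_sum_rho_removeNth [CharP F 2] (ρ : g →ₗ[F] Module.End F V)
    (hη : ∀ x : g, η * ρ x = ρ (D x) + ρ x * η) (f : (Fin n → g) → V) (z : Fin (n + 1) → g) :
    deltaOp D η (n + 1) (fun w => ∑ i, ρ (w i) (f (i.removeNth w))) z =
      ∑ i, ρ (z i) (deltaOp D η n f (i.removeNth z)) := by
  rw [deltaOp_sum_removeNth D η (fun _ a w => ρ a (f w))]
  refine sum_congr rfl fun i _ => ?_
  rw [deltaOp_rho_comp D η ρ hη, add_left_comm, add_self_eq_zero_of_charTwo F, add_zero]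

theorem deltaOp_sum_bracket_cons_removeNth (hD : ∀ x y : g, D ⁅x, y⁆ = ⁅D x, y⁆ + ⁅x, D y⁆)
    (f : (Fin (n + 2) → g) → V)
    (hf : ∀ a b w, f (Fin.cons (a + b) w) = f (Fin.cons a w) + f (Fin.cons b w))
    (x : g) (z : Fin (n + 1) → g) :
    deltaOp D η (n + 1) (fun w => ∑ i, f (Fin.cons ⁅x, w i⁆ (Fin.cons x (i.removeNth w)))) z +
      ∑ i, f (Fin.cons ⁅x, z i⁆ (Fin.cons (D x) (i.removeNth z))) +
      ∑ i, f (Fin.cons ⁅D x, z i⁆ (Fin.cons x (i.removeNth z))) =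
      ∑ i, deltaOp D η (n + 2) f (Fin.cons ⁅x, z i⁆ (Fin.cons x (i.removeNth z))) := by
  rw [deltaOp_sum_removeNth D η (fun _ a w => f (Fin.cons ⁅x, a⁆ (Fin.cons x w))),
    ← sum_add_distrib, ← sum_add_distrib]
  refine sum_congr rfl fun i _ => ?_
  rw [deltaOp_cons, deltaOp_cons, hD, hf]
  abel

theorem deltaOp_pairSum_bracket (hD : ∀ x y : g, D ⁅x, y⁆ = ⁅D x, y⁆ + ⁅x, D y⁆)
    (f : (Fin (n + 1) → g) → V)
    (hf : ∀ a b w, f (Fin.cons (a + b) w) = f (Fin.cons a w) + f (Fin.cons b w))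
    (z : Fin (n + 2) → g) :
    deltaOp D η (n + 2)
        (fun w => pairSum fun i j h => f (Fin.cons ⁅w i, w j⁆ (removeNthPair i j h w))) z =
      pairSum fun i j h => deltaOp D η (n + 1) f (Fin.cons ⁅z i, z j⁆ (removeNthPair i j h z)) := by
  rw [deltaOp_pairSum D η (fun _ _ a b w => f (Fin.cons ⁅a, b⁆ w))]
  refine pairSum_congr fun i j h => ?_
  rw [deltaOp_cons, hD, hf]
  abel

theorem deltaOmegaOp_dOp_dOmegaOp_apply [CharP F 2] (sq : g → g)
    (hD_br : ∀ x y : g, D ⁅x, y⁆ = ⁅D x, y⁆ + ⁅x, D y⁆) (hD_sq : ∀ x : g, D (sq x) = ⁅x, D x⁆)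
    (ρ : g →ₗ[F] Module.End F V) (hη : ∀ x : g, η * ρ x = ρ (D x) + ρ x * η)
    (φ : g [⋀^Fin (m + 3)]→ₗ[F] V) (ω : g → (Fin (m + 1) → g) → V)
    (hω : ∀ x a b w, ω x (Fin.cons (a + b) w) = ω x (Fin.cons a w) + ω x (Fin.cons b w))
    (x : g) (z : Fin (m + 2) → g) :
    deltaOmegaOp D η (m + 2) (dOp ρ (m + 2) φ) (dOmegaOp ρ sq m φ ω) x z =
      dOmegaOp ρ sq m (deltaOp D η (m + 3) φ) (deltaOmegaOp D η (m + 1) φ ω) x z := by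
  have h₁ := deltaOp_rho_cons D η ρ hη φ x z
  have h₂ := deltaOp_cons D η φ (sq x) z
  rw [hD_sq] at h₂
  have h₃ := deltaOp_sum_bracket_cons_removeNth D η hD_br φ
    (fun a b w => φ.map_vecCons_add w a b) x z
  have h₄ := deltaOp_sum_rho_removeNth D η ρ hη (ω x) z
  have h₅ := deltaOp_pairSum_bracket D η hD_br (ω x) (hω x) z
  have hrot : (pairSum fun i j h =>
      φ (Fin.cons x (Fin.cons (D x) (Fin.cons ⁅z i, z j⁆ (removeNthPair i j h z))))) =
      pairSum fun i j h =>
        φ (Fin.cons ⁅z i, z j⁆ (Fin.cons x (Fin.cons (D x) (removeNthPair i j h z)))) :=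
    pairSum_congr fun i j h => (φ.map_cons_rotate_of_charTwo F _ _ _ _).symm
  have h₀ := add_self_eq_zero_of_charTwo F (ρ (D x) (φ (Fin.cons x z)))
  rw [deltaOmegaOp_apply, dOmegaOp_eq_add, deltaOp_add_s3, deltaOp_add_s3, deltaOp_add_s3, deltaOp_add_s3,
    dOmegaOp_apply, dOp_cons_cons]
  simp only [deltaOmegaOp_apply, map_add, sum_add_distrib, pairSum_add]
  linear_combination (norm := abel!) h₁ - h₂ + h₃ + h₄ + h₅ - hrot + h₀

end Cochains

theorem stmt3_general
    {F : Type*} [Field F] [CharP F 2]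
    {g : Type*} [LieRing g] [LieAlgebra F g]
    {V : Type*} [AddCommGroup V] [Module F V]
    (sq : g → g)
    (D : g →ₗ[F] g)
    (hD_br : ∀ x y : g, D ⁅x, y⁆ = ⁅D x, y⁆ + ⁅x, D y⁆)
    (hD_sq : ∀ x : g, D (sq x) = ⁅x, D x⁆)
    (ρ : g →ₗ[F] Module.End F V)
    (η : Module.End F V)
    (hη : ∀ x : g, η * ρ x = ρ (D x) + ρ x * η)
    -- a k-cochain (φ, ω), k = m + 3
    (m : ℕ) (φ : g [⋀^Fin (m + 3)]→ₗ[F] V) (ω : g → (Fin (m + 1) → g) → V)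
    (hω_lin : ∀ (x : g) (z : Fin (m + 1) → g) (i : Fin (m + 1)) (a : F) (u v : g),
      ω x (Function.update z i (a • u + v)) =
        a • ω x (Function.update z i u) + ω x (Function.update z i v)) :
    deltaOmegaOp D η (m + 2) (dOp ρ (m + 2) ⇑φ) (dOmegaOp ρ sq m ⇑φ ω) =
      dOmegaOp ρ sq m (deltaOp D η (m + 3) ⇑φ) (deltaOmegaOp D η (m + 1) ⇑φ ω) := by
  funext x z
  refine deltaOmegaOp_dOp_dOmegaOp_apply D η sq hD_br hD_sq ρ hη φ ω (fun y a b w => ?_) x z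
  simpa [Fin.update_cons_zero] using hω_lin y (Fin.cons a w) 0 1 a b

/-- for every `k ≥ 3` (here `k = m + 3`) and every `k`-cochain `(φ,ω)` with
values in `V`, `δ(d^kω) = d^k(δω)`, where on the left `δ` is applied to the
`(k+1)`-cochain `(d^kφ, d^kω)` and on the right the `d^k`-formula for the `ω`-component
is applied to the `k`-cochain `(δφ, δω)`. -/
theorem stmt3
    {F : Type*} [Field F] [CharP F 2]
    {g : Type*} [LieRing g] [LieAlgebra F g]
    {V : Type*} [AddCommGroup V] [Module F V]
    (sq : g → g)
    (hsq_ad : ∀ x y : g, ⁅sq x, y⁆ = ⁅x, ⁅x, y⁆⁆)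
    (hsq_smul : ∀ (a : F) (x : g), sq (a • x) = a ^ 2 • sq x)
    (hsq_add : ∀ x y : g, sq (x + y) = sq x + sq y + ⁅x, y⁆)
    (D : g →ₗ[F] g)
    (hD_br : ∀ x y : g, D ⁅x, y⁆ = ⁅D x, y⁆ + ⁅x, D y⁆)
    (hD_sq : ∀ x : g, D (sq x) = ⁅x, D x⁆)
    (ρ : g →ₗ[F] Module.End F V)
    (hρ_br : ∀ x y : g, ρ ⁅x, y⁆ = ρ x * ρ y - ρ y * ρ x)
    (hρ_sq : ∀ x : g, ρ (sq x) = ρ x * ρ x)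
    (η : Module.End F V)
    (hη : ∀ x : g, η * ρ x = ρ (D x) + ρ x * η)
    -- a k-cochain (φ, ω), k = m + 3
    (m : ℕ) (φ : g [⋀^Fin (m + 3)]→ₗ[F] V) (ω : g → (Fin (m + 1) → g) → V)
    (hω_smul : ∀ (a : F) (x : g) (z : Fin (m + 1) → g), ω (a • x) z = a ^ 2 • ω x z)
    (hω_add : ∀ (x y : g) (z : Fin (m + 1) → g),
      ω (x + y) z = ω x z + ω y z + φ (Fin.cons x (Fin.cons y z)))
    (hω_lin : ∀ (x : g) (z : Fin (m + 1) → g) (i : Fin (m + 1)) (a : F) (u v : g),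
      ω x (Function.update z i (a • u + v)) =
        a • ω x (Function.update z i u) + ω x (Function.update z i v)) :
    deltaOmegaOp D η (m + 2) (dOp ρ (m + 2) ⇑φ) (dOmegaOp ρ sq m ⇑φ ω) =
      dOmegaOp ρ sq m (deltaOp D η (m + 3) ⇑φ) (deltaOmegaOp D η (m + 1) ⇑φ ω) :=
  stmt3_general sq D hD_br hD_sq ρ η hη m φ ω hω_lin
end

section
/- Let ((g,[2]),D) be a ResLieDer pair over F and (V,ρ,η) a restricted representation of it. Then ϑ²∘ϑ¹ = 0: for every F-linear map φ : g → V, (a) d²(d¹φ) = 0 as a map g³ → V; (b) the d²-formula for the ω-component applied to the 2-cochain (d¹φ, ω_φ) vanishes, i.e. ρ(x)((d¹φ)(x,z)) + (d¹φ)(x^[2],z) + (d¹φ)([x,z],x) + ρ(z)(ω_φ(x)) = 0 for all x,z ∈ g; (c) d¹(δφ) + δ(d¹φ) = 0; and (d) ω_{δφ} + δω_φ = 0, where δω_φ(x) = η(ω_φ(x)) + (d¹φ)(x,D(x)). -/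
/-- `ϑ² ∘ ϑ¹ = 0` for the cochain complex of a ResLieDer pair. -/
theorem stmt4
    {F : Type*} [Field F] [CharP F 2]
    {g : Type*} [LieRing g] [LieAlgebra F g]
    {V : Type*} [AddCommGroup V] [Module F V]
    (sq : g → g)
    (hsq_ad : ∀ x y : g, ⁅sq x, y⁆ = ⁅x, ⁅x, y⁆⁆)
    (hsq_smul : ∀ (a : F) (x : g), sq (a • x) = a ^ 2 • sq x)
    (hsq_add : ∀ x y : g, sq (x + y) = sq x + sq y + ⁅x, y⁆)
    (D : g →ₗ[F] g)
    (hD_br : ∀ x y : g, D ⁅x, y⁆ = ⁅D x, y⁆ + ⁅x, D y⁆)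
    (hD_sq : ∀ x : g, D (sq x) = ⁅x, D x⁆)
    (ρ : g →ₗ[F] Module.End F V)
    (hρ_br : ∀ x y : g, ρ ⁅x, y⁆ = ρ x * ρ y - ρ y * ρ x)
    (hρ_sq : ∀ x : g, ρ (sq x) = ρ x * ρ x)
    (η : Module.End F V)
    (hη : ∀ x : g, η * ρ x = ρ (D x) + ρ x * η)
    (φ : g →ₗ[F] V) :
    let d1φ : g → g → V := fun x y => φ ⁅x, y⁆ + ρ x (φ y) + ρ y (φ x)
    let ωφ : g → V := fun x => φ (sq x) + ρ x (φ x)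
    let δφ : g → V := fun x => η (φ x) + φ (D x)
    -- (a) d²(d¹φ) = 0
    ((∀ x y z : g,
        ρ x (d1φ y z) + ρ y (d1φ z x) + ρ z (d1φ x y) +
          d1φ ⁅x, y⁆ z + d1φ ⁅y, z⁆ x + d1φ ⁅z, x⁆ y = 0) ∧
     -- (b) the d²-formula for the ω-component applied to (d¹φ, ω_φ) vanishes
     (∀ x z : g,
        ρ x (d1φ x z) + d1φ (sq x) z + d1φ ⁅x, z⁆ x + ρ z (ωφ x) = 0) ∧
     -- (c) d¹(δφ) + δ(d¹φ) = 0
     (∀ x y : g,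
        (δφ ⁅x, y⁆ + ρ x (δφ y) + ρ y (δφ x)) +
          (η (d1φ x y) + d1φ (D x) y + d1φ x (D y)) = 0) ∧
     -- (d) ω_{δφ} + δω_φ = 0
     (∀ x : g,
        (δφ (sq x) + ρ x (δφ x)) + (η (ωφ x) + d1φ x (D x)) = 0)) := by
  intro d1φ ωφ δφ
  have htwo : ∀ v : V, v + v = 0 := by
    intro v
    have : ((1:F) + 1) • v = 0 := by
      rw [CharTwo.add_self_eq_zero, zero_smul]
    rwa [add_smul, one_smul] at this
  have hηρ : ∀ (x : g) (v : V), η (ρ x v) = ρ (D x) v + ρ x (η v) := by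
    intro x v
    have := congrArg (fun f : Module.End F V => f v) (hη x)
    simpa [Module.End.mul_apply] using this
  have hρbr : ∀ (x y : g) (v : V), ρ ⁅x,y⁆ v = ρ x (ρ y v) - ρ y (ρ x v) := by
    intro x y v
    have := congrArg (fun f : Module.End F V => f v) (hρ_br x y)
    simpa [Module.End.mul_apply] using this
  have hρsq : ∀ (x : g) (v : V), ρ (sq x) v = ρ x (ρ x v) := by
    intro x v
    have := congrArg (fun f : Module.End F V => f v) (hρ_sq x)
    simpa [Module.End.mul_apply] using this
  have hsk : ∀ a b : g, (⁅a,b⁆:g) = ⁅b,a⁆ := by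
    intro a b
    have hg : ∀ w : g, -w = w := by
      intro w
      have : ((1:F) + 1) • w = 0 := by rw [CharTwo.add_self_eq_zero, zero_smul]
      rw [add_smul, one_smul] at this
      exact neg_eq_of_add_eq_zero_left this
    rw [← lie_skew, hg]
  refine ⟨?_, ?_, ?_, ?_⟩
  · intro x y z
    simp only [d1φ, map_add, hρbr, lie_lie, map_sub, hρsq]
    abel_nf
    simp only [two_smul, htwo]
    rw [hsk z x, hsk y x, hsk z y]
    abel
  · intro x z
    simp only [d1φ, ωφ, map_add, hρbr, hρsq, hsq_ad, lie_lie, map_sub]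
    abel_nf
    simp only [two_smul, htwo]
    rw [hsk z x]
    simp [htwo]
  · intro x y
    simp only [d1φ, δφ, map_add, hρbr, hηρ, hD_br, lie_lie, map_sub]
    abel_nf
    simp [two_smul, htwo]
  · intro x
    simp only [d1φ, ωφ, δφ, map_add, hρbr, hρsq, hηρ, hD_sq, lie_lie, map_sub]
    abel_nf
    simp [two_smul, htwo]
end

section
/- Let ((g,[2]),D) be a ResLieDer pair over F and (V,ρ,η) a restricted representation of it. Then ϑ³∘ϑ² = 0: for every 2-cochain (φ₂,ω₂) with values in V and every F-linear map φ₁ : g → V, the following hold: (a) d³(d²φ₂) = 0 as a map g⁴ → V; (b) the d³-formula for the ω-component applied to the 3-cochain (d²φ₂, d²ω₂) vanishes as a map g³ → V; (c) d²(d¹φ₁ + δφ₂) + δ(d²φ₂) = 0 as maps g³ → V, where the last δ is the δ on alternating trilinear maps; (d) the d²-formula for the ω-component applied to the 2-cochain (d¹φ₁ + δφ₂, ω_{φ₁} + δω₂) plus the δ-formula for the ω-component applied to the 3-cochain (d²φ₂, d²ω₂) vanishes as a map g² → V. -/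
/-- `ϑ³ ∘ ϑ² = 0` for the cochain complex of a ResLieDer pair. -/
theorem stmt5
    {F : Type*} [Field F] [CharP F 2]
    {g : Type*} [LieRing g] [LieAlgebra F g]
    {V : Type*} [AddCommGroup V] [Module F V]
    (sq : g → g)
    (hsq_ad : ∀ x y : g, ⁅sq x, y⁆ = ⁅x, ⁅x, y⁆⁆)
    (hsq_smul : ∀ (a : F) (x : g), sq (a • x) = a ^ 2 • sq x)
    (hsq_add : ∀ x y : g, sq (x + y) = sq x + sq y + ⁅x, y⁆)
    (D : g →ₗ[F] g)
    (hD_br : ∀ x y : g, D ⁅x, y⁆ = ⁅D x, y⁆ + ⁅x, D y⁆)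
    (hD_sq : ∀ x : g, D (sq x) = ⁅x, D x⁆)
    (ρ : g →ₗ[F] Module.End F V)
    (hρ_br : ∀ x y : g, ρ ⁅x, y⁆ = ρ x * ρ y - ρ y * ρ x)
    (hρ_sq : ∀ x : g, ρ (sq x) = ρ x * ρ x)
    (η : Module.End F V)
    (hη : ∀ x : g, η * ρ x = ρ (D x) + ρ x * η)
    -- a 2-cochain (φ₂, ω₂):
    (φ₂ : g → g → V)
    (hφ₂₁ : ∀ (a : F) (x x' y : g), φ₂ (a • x + x') y = a • φ₂ x y + φ₂ x' y)
    (hφ₂₂ : ∀ (a : F) (x y y' : g), φ₂ x (a • y + y') = a • φ₂ x y + φ₂ x y')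
    (hφ₂alt : ∀ x : g, φ₂ x x = 0)
    (ω₂ : g → V)
    (hω₂smul : ∀ (a : F) (x : g), ω₂ (a • x) = a ^ 2 • ω₂ x)
    (hω₂add : ∀ x y : g, ω₂ (x + y) = ω₂ x + ω₂ y + φ₂ x y)
    -- a linear 1-cochain φ₁:
    (φ₁ : g →ₗ[F] V) :
    let d2φ : g → g → g → V := fun x y z =>
      ρ x (φ₂ y z) + ρ y (φ₂ z x) + ρ z (φ₂ x y) +
        φ₂ ⁅x, y⁆ z + φ₂ ⁅y, z⁆ x + φ₂ ⁅z, x⁆ y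
    let d2ω : g → g → V := fun x z =>
      ρ x (φ₂ x z) + φ₂ (sq x) z + φ₂ ⁅x, z⁆ x + ρ z (ω₂ x)
    let d1φ₁ : g → g → V := fun x y => φ₁ ⁅x, y⁆ + ρ x (φ₁ y) + ρ y (φ₁ x)
    let ωφ₁ : g → V := fun x => φ₁ (sq x) + ρ x (φ₁ x)
    let δφ₂ : g → g → V := fun x y => η (φ₂ x y) + φ₂ (D x) y + φ₂ x (D y)
    let δω₂ : g → V := fun x => η (ω₂ x) + φ₂ x (D x)
    let ψ : g → g → V := fun x y => d1φ₁ x y + δφ₂ x y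
    let ϖ : g → V := fun x => ωφ₁ x + δω₂ x
    -- (a) d³(d²φ₂) = 0
    ((∀ z₁ z₂ z₃ z₄ : g,
        ρ z₁ (d2φ z₂ z₃ z₄) + ρ z₂ (d2φ z₁ z₃ z₄) + ρ z₃ (d2φ z₁ z₂ z₄) +
          ρ z₄ (d2φ z₁ z₂ z₃) +
          d2φ ⁅z₁, z₂⁆ z₃ z₄ + d2φ ⁅z₁, z₃⁆ z₂ z₄ + d2φ ⁅z₁, z₄⁆ z₂ z₃ +
          d2φ ⁅z₂, z₃⁆ z₁ z₄ + d2φ ⁅z₂, z₄⁆ z₁ z₃ + d2φ ⁅z₃, z₄⁆ z₁ z₂ = 0) ∧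
     -- (b) the d³-formula for the ω-component applied to (d²φ₂, d²ω₂) vanishes
     (∀ x z₁ z₂ : g,
        ρ x (d2φ x z₁ z₂) + d2φ (sq x) z₁ z₂ + d2φ ⁅x, z₁⁆ x z₂ + d2φ ⁅x, z₂⁆ x z₁ +
          ρ z₁ (d2ω x z₂) + ρ z₂ (d2ω x z₁) + d2ω x ⁅z₁, z₂⁆ = 0) ∧
     -- (c) d²(d¹φ₁ + δφ₂) + δ(d²φ₂) = 0
     (∀ x y z : g,
        (ρ x (ψ y z) + ρ y (ψ z x) + ρ z (ψ x y) +
            ψ ⁅x, y⁆ z + ψ ⁅y, z⁆ x + ψ ⁅z, x⁆ y) +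
          (η (d2φ x y z) + d2φ (D x) y z + d2φ x (D y) z + d2φ x y (D z)) = 0) ∧
     -- (d) d²-ω-formula on (d¹φ₁ + δφ₂, ω_{φ₁} + δω₂) plus δ-ω-formula on (d²φ₂, d²ω₂)
     (∀ x z : g,
        (ρ x (ψ x z) + ψ (sq x) z + ψ ⁅x, z⁆ x + ρ z (ϖ x)) +
          (η (d2ω x z) + d2ω x (D z) + d2φ x (D x) z) = 0)) := by
  have h2F : (2 : F) = 0 := by
    have h := CharP.cast_eq_zero F 2
    exact_mod_cast h
  have addg : ∀ w : g, w + w = 0 := fun w => by rw [← two_smul F w, h2F, zero_smul]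
  have negg : ∀ w : g, -w = w := fun w => by rw [neg_eq_iff_add_eq_zero, addg]
  have addV : ∀ v : V, v + v = 0 := fun v => by rw [← two_smul F v, h2F, zero_smul]
  have negV : ∀ v : V, -v = v := fun v => by rw [neg_eq_iff_add_eq_zero, addV]
  have subV : ∀ a b : V, a - b = a + b := fun a b => by rw [sub_eq_add_neg, negV]
  have subg : ∀ a b : g, a - b = a + b := fun a b => by rw [sub_eq_add_neg, negg]
  have evenV : ∀ v : V, (2 : ℤ) • v = 0 := fun v => by rw [two_zsmul]; exact addV v
  have evenVn : ∀ v : V, (2 : ℕ) • v = 0 := fun v => by rw [two_nsmul]; exact addV v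
  have ρbr : ∀ x y : g, ∀ v : V, ρ ⁅x, y⁆ v = ρ x (ρ y v) + ρ y (ρ x v) := by
    intro x y v
    rw [hρ_br]
    simp [LinearMap.sub_apply, Module.End.mul_apply, subV]
  have ρsq : ∀ x : g, ∀ v : V, ρ (sq x) v = ρ x (ρ x v) := by
    intro x v; rw [hρ_sq]; simp [Module.End.mul_apply]
  have ηρ : ∀ x : g, ∀ v : V, η (ρ x v) = ρ (D x) v + ρ x (η v) := by
    intro x v
    have h := LinearMap.congr_fun (hη x) v
    simpa [Module.End.mul_apply, LinearMap.add_apply] using h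
  have φ0l : ∀ y : g, φ₂ 0 y = 0 := by
    intro y
    have h := hφ₂₁ 1 0 0 y
    simp at h
    exact h
  have φ0r : ∀ y : g, φ₂ y 0 = 0 := by
    intro y
    have h := hφ₂₂ 1 y 0 0
    simp at h
    exact h
  have φaddl : ∀ x y z : g, φ₂ (x + y) z = φ₂ x z + φ₂ y z := by
    intro x y z; simpa using hφ₂₁ 1 x y z
  have φaddr : ∀ x y z : g, φ₂ x (y + z) = φ₂ x y + φ₂ x z := by
    intro x y z; simpa using hφ₂₂ 1 x y z
  have φsmull : ∀ (a : F) (x z : g), φ₂ (a • x) z = a • φ₂ x z := by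
    intro a x z; simpa [φ0l] using hφ₂₁ a x 0 z
  have φsmulr : ∀ (a : F) (x z : g), φ₂ x (a • z) = a • φ₂ x z := by
    intro a x z; simpa [φ0r] using hφ₂₂ a x z 0
  have φswap : ∀ x y : g, φ₂ y x = φ₂ x y := by
    intro x y
    have h0 := hφ₂alt (x + y)
    simp [φaddl, φaddr, hφ₂alt] at h0
    rw [← negV (φ₂ x y)]
    exact eq_neg_of_add_eq_zero_right h0
  have flip : ∀ a b : g, ⁅a, b⁆ = ⁅b, a⁆ := fun a b => by rw [← lie_skew, negg]
  have jac : ∀ a b c : g, ⁅a, ⁅b, c⁆⁆ = ⁅b, ⁅a, c⁆⁆ + ⁅c, ⁅a, b⁆⁆ := by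
    intro a b c
    rw [leibniz_lie, flip ⁅a, b⁆ c]
    exact add_comm _ _
  have sqad' : ∀ x y : g, ⁅y, sq x⁆ = ⁅x, ⁅x, y⁆⁆ := by
    intro x y
    rw [← lie_skew, negg, hsq_ad]
  intro d2φ d2ω d1φ₁ ωφ₁ δφ₂ δω₂ ψ ϖ
  refine ⟨?_, ?_, ?_, ?_⟩
  · intro z₁ z₂ z₃ z₄
    simp only [d2φ, ρbr, map_add, φaddl, φaddr, lie_add, add_lie, subg, subV,
      flip z₂ z₁, flip z₃ z₁, flip z₄ z₁, flip z₃ z₂, flip z₄ z₂, flip z₄ z₃, flip ⁅z₁, z₂⁆ z₃, flip ⁅z₁, z₂⁆ z₄, flip ⁅z₁, z₃⁆ z₂, flip ⁅z₁, z₃⁆ z₄, flip ⁅z₁, z₄⁆ z₂, flip ⁅z₁, z₄⁆ z₃, flip ⁅z₂, z₃⁆ z₁, flip ⁅z₂, z₃⁆ z₄, flip ⁅z₂, z₄⁆ z₁, flip ⁅z₂, z₄⁆ z₃, flip ⁅z₃, z₄⁆ z₁, flip ⁅z₃, z₄⁆ z₂, jac z₁ z₂ z₃, jac z₁ z₂ z₄,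 jac z₁ z₃ z₄, jac z₂ z₃ z₄, φswap z₁ z₂, φswap z₁ z₃, φswap z₁ z₄, φswap z₂ z₃, φswap z₂ z₄, φswap z₃ z₄, φswap ⁅z₁, z₂⁆ z₃, φswap ⁅z₁, z₂⁆ z₄, φswap ⁅z₁, z₃⁆ z₂, φswap ⁅z₁, z₃⁆ z₄, φswap ⁅z₁, z₄⁆ z₂, φswap ⁅z₁, z₄⁆ z₃, φswap ⁅z₂, z₃⁆ z₁, φswap ⁅z₂, z₃⁆ z₄, φswap ⁅z₂, z₄⁆ z₁, φswap ⁅z₂, z₄⁆ z₃, φswap ⁅z₃, z₄⁆ z₁, φswap ⁅z₃, z₄⁆ z₂, φswap ⁅z₁, z₂⁆ ⁅z₃, z₄⁆, φswap ⁅z₁, z₃⁆ ⁅z₂, z₄⁆, φswap ⁅z₁, z₄⁆ ⁅z₂, z₃⁆]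
    abel_nf
    simp only [evenV, evenVn, add_zero, zero_add]
  · intro x z₁ z₂
    simp only [d2φ, d2ω, ρbr, ρsq, map_add, φaddl, φaddr, lie_add, add_lie, subg, subV,
      hsq_ad, sqad',
      flip z₁ x, flip z₂ x, flip z₂ z₁, flip ⁅x, z₁⁆ x, flip ⁅x, z₁⁆ z₁, flip ⁅x, z₁⁆ z₂, flip ⁅x, z₂⁆ x, flip ⁅x, z₂⁆ z₁, flip ⁅x, z₂⁆ z₂, flip ⁅z₁, z₂⁆ x, flip ⁅z₁, z₂⁆ z₁, flip ⁅z₁, z₂⁆ z₂, flip ⁅x, z₂⁆ ⁅x, z₁⁆, flip ⁅z₁, z₂⁆ ⁅x, z₁⁆, flip ⁅z₁, z₂⁆ ⁅x, z₂⁆, jac x z₁ z₂, φswap x z₁, φswap x z₂, φswap z₁ z₂, φswap ⁅x, z₁⁆ x, φswap ⁅x, z₁⁆ z₁, φswap ⁅x, z₁⁆ z₂, φswap ⁅x, z₂⁆ x, φswap ⁅x, z₂⁆ z₁, φswap ⁅x, z₂⁆ z₂, φswap ⁅z₁, z₂⁆ x, φswap ⁅z₁, z₂⁆ z₁, φswap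 ⁅z₁, z₂⁆ z₂, φswap ⁅x, z₁⁆ ⁅x, z₂⁆, φswap ⁅x, z₁⁆ ⁅z₁, z₂⁆, φswap ⁅x, z₂⁆ ⁅z₁, z₂⁆, φswap (sq x) x, φswap (sq x) z₁, φswap (sq x) z₂, φswap (sq x) ⁅x, z₁⁆, φswap (sq x) ⁅x, z₂⁆, φswap (sq x) ⁅z₁, z₂⁆]
    abel_nf
    simp only [evenV, evenVn, add_zero, zero_add]
  · intro x y z
    simp only [ψ, d1φ₁, δφ₂, d2φ, ρbr, ρsq, ηρ, hD_br, map_add, LinearMap.add_apply,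
      φaddl, φaddr, lie_add, add_lie, subg, subV,
      flip y x, flip z x, flip (D x) x, flip (D y) x, flip (D z) x, flip ⁅x, y⁆ x, flip ⁅x, z⁆ x, flip ⁅y, z⁆ x, flip z y, flip (D x) y, flip (D y) y, flip (D z) y, flip ⁅x, y⁆ y, flip ⁅x, z⁆ y, flip ⁅y, z⁆ y, flip (D x) z, flip (D y) z, flip (D z) z, flip ⁅x, y⁆ z, flip ⁅x, z⁆ z, flip ⁅y, z⁆ z, flip (D y) (D x), flip (D z) (D x), flip ⁅x, y⁆ (D x), flip ⁅x, z⁆ (D x), flip ⁅y, z⁆ (D x), flip (D z) (D y), flip ⁅x, y⁆ (D y), flip ⁅x, z⁆ (D y), flip ⁅y, z⁆ (D y), flip ⁅x, y⁆ (D z), flip ⁅x, z⁆ (D z), flip ⁅y, z⁆ (D z), flip ⁅x, z⁆ ⁅x, y⁆, flip ⁅y, z⁆ ⁅x, y⁆, flip ⁅y, z⁆ ⁅x, z⁆, jac x y z, φswap x y, φswap x z, φswap x (D x), φswap x (D y), φswap x (D z), φswap x ⁅x, y⁆, φswap x ⁅x, z⁆, φswap x ⁅y, z⁆, φswap y z,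 φswap y (D x), φswap y (D y), φswap y (D z), φswap y ⁅x, y⁆, φswap y ⁅x, z⁆, φswap y ⁅y, z⁆, φswap z (D x), φswap z (D y), φswap z (D z), φswap z ⁅x, y⁆, φswap z ⁅x, z⁆, φswap z ⁅y, z⁆, φswap (D x) (D y), φswap (D x) (D z), φswap (D x) ⁅x, y⁆, φswap (D x) ⁅x, z⁆, φswap (D x) ⁅y, z⁆, φswap (D y) (D z), φswap (D y) ⁅x, y⁆, φswap (D y) ⁅x, z⁆, φswap (D y) ⁅y, z⁆, φswap (D z) ⁅x, y⁆, φswap (D z) ⁅x, z⁆, φswap (D z) ⁅y, z⁆, φswap ⁅x, y⁆ ⁅x, z⁆, φswap ⁅x, y⁆ ⁅y, z⁆, φswap ⁅x, z⁆ ⁅y, z⁆]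
    abel_nf
    simp only [evenV, evenVn, add_zero, zero_add]
  · intro x z
    simp only [ψ, ϖ, d1φ₁, ωφ₁, δφ₂, δω₂, d2φ, d2ω, ρbr, ρsq, ηρ, hD_br, hD_sq,
      hsq_ad, sqad', map_add, LinearMap.add_apply,
      φaddl, φaddr, lie_add, add_lie, subg, subV,
      flip z x, flip (D x) x, flip (D z) x, flip (sq x) x, flip ⁅x, z⁆ x, flip ⁅x, D x⁆ x, flip ⁅x, D z⁆ x, flip ⁅z, D x⁆ x, flip ⁅x, ⁅x, z⁆⁆ x, flip (D x) z, flip (D z) z, flip (sq x) z, flip ⁅x, z⁆ z, flip ⁅x, D x⁆ z, flip ⁅x, D z⁆ z, flip ⁅z, D x⁆ z, flip ⁅x, ⁅x, z⁆⁆ z, flip (D z) (D x), flip (sq x) (D x), flip ⁅x, z⁆ (D x), flip ⁅x, D x⁆ (D x), flip ⁅x, D z⁆ (D x), flip ⁅z, D x⁆ (D x), flip ⁅x, ⁅x, z⁆⁆ (D x), flip (sq x) (D z), flip ⁅x, z⁆ (D z), flip ⁅x, D x⁆ (D z), flip ⁅x, D z⁆ (D z), flip ⁅z, D x⁆ (D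 z), flip ⁅x, ⁅x, z⁆⁆ (D z), flip ⁅x, z⁆ (sq x), flip ⁅x, D x⁆ (sq x), flip ⁅x, D z⁆ (sq x), flip ⁅z, D x⁆ (sq x), flip ⁅x, ⁅x, z⁆⁆ (sq x), flip ⁅x, D x⁆ ⁅x, z⁆, flip ⁅x, D z⁆ ⁅x, z⁆, flip ⁅z, D x⁆ ⁅x, z⁆, flip ⁅x, ⁅x, z⁆⁆ ⁅x, z⁆, flip ⁅x, D z⁆ ⁅x, D x⁆, flip ⁅z, D x⁆ ⁅x, D x⁆, flip ⁅x, ⁅x, z⁆⁆ ⁅x, D x⁆, flip ⁅z, D x⁆ ⁅x, D z⁆, flip ⁅x, ⁅x, z⁆⁆ ⁅x, D z⁆, flip ⁅x, ⁅x, z⁆⁆ ⁅z, D x⁆, φswap x z, φswap x (D x), φswap x (D z), φswap x (sq x), φswap x ⁅x, z⁆, φswap x ⁅x, D x⁆, φswap x ⁅x, D z⁆, φswap x ⁅z, D x⁆, φswap x ⁅x, ⁅x, z⁆⁆, φswap z (D x), φswap z (D z), φswap z (sq x), φswap z ⁅x, z⁆, φswap z ⁅x, D x⁆, φswap z ⁅x,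 D z⁆, φswap z ⁅z, D x⁆, φswap z ⁅x, ⁅x, z⁆⁆, φswap (D x) (D z), φswap (D x) (sq x), φswap (D x) ⁅x, z⁆, φswap (D x) ⁅x, D x⁆, φswap (D x) ⁅x, D z⁆, φswap (D x) ⁅z, D x⁆, φswap (D x) ⁅x, ⁅x, z⁆⁆, φswap (D z) (sq x), φswap (D z) ⁅x, z⁆, φswap (D z) ⁅x, D x⁆, φswap (D z) ⁅x, D z⁆, φswap (D z) ⁅z, D x⁆, φswap (D z) ⁅x, ⁅x, z⁆⁆, φswap (sq x) ⁅x, z⁆, φswap (sq x) ⁅x, D x⁆, φswap (sq x) ⁅x, D z⁆, φswap (sq x) ⁅z, D x⁆, φswap (sq x) ⁅x, ⁅x, z⁆⁆, φswap ⁅x, z⁆ ⁅x, D x⁆, φswap ⁅x, z⁆ ⁅x, D z⁆, φswap ⁅x, z⁆ ⁅z, D x⁆, φswap ⁅x, z⁆ ⁅x, ⁅x, z⁆⁆, φswap ⁅x, D x⁆ ⁅x, D z⁆, φswap ⁅x, D x⁆ ⁅z, D x⁆, φswap ⁅x, D x⁆ ⁅x, ⁅x, z⁆⁆, φswap ⁅x,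 D z⁆ ⁅z, D x⁆, φswap ⁅x, D z⁆ ⁅x, ⁅x, z⁆⁆, φswap ⁅z, D x⁆ ⁅x, ⁅x, z⁆⁆]
    abel_nf
    simp only [evenV, evenVn, add_zero, zero_add]
end

section
/- Let ((g,[2]),D) be a ResLieDer pair over F and let (μ_i, σ_i, D_i)_{i≥0} be a 1-parameter formal deformation of ((g,[2]),D). Then ((μ₁,σ₁),D₁) is a 2-cocycle of ((g,[2]),D) with adjoint coefficients; explicitly, for all x,y,z ∈ g: [x,μ₁(y,z)] + μ₁(x,[y,z]) + [y,μ₁(z,x)] + μ₁(y,[z,x]) + [z,μ₁(x,y)] + μ₁(z,[x,y]) = 0; [x,μ₁(x,y)] + μ₁(x^[2],y) + μ₁([x,y],x) + [y,σ₁(x)] = 0; D₁([x,y]) + [x,D₁(y)] + [y,D₁(x)] + μ₁(D(x),y) + μ₁(x,D(y)) + D(μ₁(x,y)) = 0; and D₁(x^[2]) + [x,D₁(x)] + D(σ₁(x)) + μ₁(x,D(x)) = 0. -/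
/-!
Only the coefficient of `t¹` in each deformation equation is needed: the antidiagonal of `1`
is `{(0, 1), (1, 0)}`, so each equation at `k = 1` is a cocycle identity once `μ₀`, `σ₀`, `D₀`
are replaced by the bracket, the square map and `D`. What remains is a matter of ordering the
arguments, and in characteristic `2` both the bracket and the alternating map `μ₁` are symmetric.
-/

theorem neg_eq_self_of_charP_two (F : Type*) {M : Type*} [Ring F] [CharP F 2] [AddCommGroup M]
    [Module F M] (a : M) : -a = a := by
  rw [← neg_one_smul F a, CharTwo.neg_eq, one_smul]

theorem lie_comm_of_charP_two (F : Type*) {L : Type*} [CommRing F] [CharP F 2] [LieRing L]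
    [LieAlgebra F L] (x y : L) : ⁅x, y⁆ = ⁅y, x⁆ := by
  rw [← lie_skew, neg_eq_self_of_charP_two F]

theorem neg_swap_of_map_self_eq_zero {M N : Type*} [AddCommGroup M] [AddCommGroup N]
    (f : M → M → N) (hadd_left : ∀ x x' y, f (x + x') y = f x y + f x' y)
    (hadd_right : ∀ x y y', f x (y + y') = f x y + f x y') (halt : ∀ x, f x x = 0) (x y : M) :
    -f y x = f x y := by
  have hsum : f x y + f y x = 0 := by
    simpa [hadd_left, hadd_right, halt] using halt (x + y)
  exact neg_eq_of_add_eq_zero_left hsum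

theorem Finset.Nat.sum_antidiagonal_one {M : Type*} [AddCommMonoid M] (f : ℕ × ℕ → M) :
    ∑ p ∈ Finset.HasAntidiagonal.antidiagonal 1, f p = f (0, 1) + f (1, 0) := by
  simp [Finset.Nat.sum_antidiagonal_succ]

theorem stmt6_general
    {F : Type*} [Field F] [CharP F 2]
    {g : Type*} [LieRing g] [LieAlgebra F g]
    (sq : g → g)
    (D : g →ₗ[F] g)
    -- a 1-parameter formal deformation (μᵢ, σᵢ, Dᵢ)
    (μ : ℕ → g → g → g) (σ : ℕ → g → g) (Dd : ℕ → g →ₗ[F] g)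
    (hμ₁ : ∀ (i : ℕ) (a : F) (x x' y : g), μ i (a • x + x') y = a • μ i x y + μ i x' y)
    (hμ₂ : ∀ (i : ℕ) (a : F) (x y y' : g), μ i x (a • y + y') = a • μ i x y + μ i x y')
    (hμalt : ∀ (i : ℕ) (x : g), μ i x x = 0)
    (hμ0 : ∀ x y : g, μ 0 x y = ⁅x, y⁆)
    (hσ0 : ∀ x : g, σ 0 x = sq x)
    (hD0 : Dd 0 = D)
    (heq1 : ∀ (k : ℕ) (x y z : g),
      ∑ p ∈ Finset.HasAntidiagonal.antidiagonal k,
        (μ p.1 x (μ p.2 y z) + μ p.1 y (μ p.2 z x) + μ p.1 z (μ p.2 x y)) = 0)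
    (heq2 : ∀ (k : ℕ) (x y : g),
      ∑ p ∈ Finset.HasAntidiagonal.antidiagonal k, (μ p.1 (σ p.2 x) y + μ p.1 x (μ p.2 x y)) = 0)
    (heq3 : ∀ (k : ℕ) (x y : g),
      ∑ p ∈ Finset.HasAntidiagonal.antidiagonal k,
        (Dd p.1 (μ p.2 x y) + μ p.2 (Dd p.1 x) y + μ p.2 x (Dd p.1 y)) = 0)
    (heq4 : ∀ (k : ℕ) (x : g),
      ∑ p ∈ Finset.HasAntidiagonal.antidiagonal k, (Dd p.1 (σ p.2 x) + μ p.2 x (Dd p.1 x)) = 0) :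
    ∀ x y z : g,
      (⁅x, μ 1 y z⁆ + μ 1 x ⁅y, z⁆ + ⁅y, μ 1 z x⁆ + μ 1 y ⁅z, x⁆ +
          ⁅z, μ 1 x y⁆ + μ 1 z ⁅x, y⁆ = 0) ∧
      (⁅x, μ 1 x y⁆ + μ 1 (sq x) y + μ 1 ⁅x, y⁆ x + ⁅y, σ 1 x⁆ = 0) ∧
      (Dd 1 ⁅x, y⁆ + ⁅x, Dd 1 y⁆ + ⁅y, Dd 1 x⁆ +
          μ 1 (D x) y + μ 1 x (D y) + D (μ 1 x y) = 0) ∧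
      (Dd 1 (sq x) + ⁅x, Dd 1 x⁆ + D (σ 1 x) + μ 1 x (D x) = 0) := by
  have hμ₁_comm (x y : g) : μ 1 x y = μ 1 y x := by
    rw [← neg_swap_of_map_self_eq_zero (μ 1) (by simpa using hμ₁ 1 1) (by simpa using hμ₂ 1 1)
      (hμalt 1), neg_eq_self_of_charP_two F]
  intro x y z
  refine ⟨?_, ?_, ?_, ?_⟩
  · have H := heq1 1 x y z
    simp only [Finset.Nat.sum_antidiagonal_one, hμ0] at H
    rw [← H]
    abel
  · have H := heq2 1 x y
    simp only [Finset.Nat.sum_antidiagonal_one, hμ0, hσ0] at H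
    rw [lie_comm_of_charP_two F y, hμ₁_comm ⁅x, y⁆, ← H]
    abel
  · have H := heq3 1 x y
    simp only [Finset.Nat.sum_antidiagonal_one, hμ0, hD0] at H
    rw [lie_comm_of_charP_two F y, ← H]
    abel
  · have H := heq4 1 x
    simp only [Finset.Nat.sum_antidiagonal_one, hμ0, hσ0, hD0] at H
    rw [← H]
    abel

/-- the infinitesimal `((μ₁,σ₁),D₁)` of a 1-parameter formal deformation of a
ResLieDer pair `((g,[2]),D)` is a 2-cocycle with adjoint coefficients. -/
theorem stmt6
    {F : Type*} [Field F] [CharP F 2]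
    {g : Type*} [LieRing g] [LieAlgebra F g]
    (sq : g → g)
    (hsq_ad : ∀ x y : g, ⁅sq x, y⁆ = ⁅x, ⁅x, y⁆⁆)
    (hsq_smul : ∀ (a : F) (x : g), sq (a • x) = a ^ 2 • sq x)
    (hsq_add : ∀ x y : g, sq (x + y) = sq x + sq y + ⁅x, y⁆)
    (D : g →ₗ[F] g)
    (hD_br : ∀ x y : g, D ⁅x, y⁆ = ⁅D x, y⁆ + ⁅x, D y⁆)
    (hD_sq : ∀ x : g, D (sq x) = ⁅x, D x⁆)
    -- a 1-parameter formal deformation (μᵢ, σᵢ, Dᵢ)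
    (μ : ℕ → g → g → g) (σ : ℕ → g → g) (Dd : ℕ → g →ₗ[F] g)
    (hμ₁ : ∀ (i : ℕ) (a : F) (x x' y : g), μ i (a • x + x') y = a • μ i x y + μ i x' y)
    (hμ₂ : ∀ (i : ℕ) (a : F) (x y y' : g), μ i x (a • y + y') = a • μ i x y + μ i x y')
    (hμalt : ∀ (i : ℕ) (x : g), μ i x x = 0)
    (hμ0 : ∀ x y : g, μ 0 x y = ⁅x, y⁆)
    (hσ0 : ∀ x : g, σ 0 x = sq x)
    (hD0 : Dd 0 = D)
    (hσ_smul : ∀ (i : ℕ) (a : F) (x : g), σ i (a • x) = a ^ 2 • σ i x)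
    (hσ_add : ∀ (i : ℕ) (x y : g), σ i (x + y) = σ i x + σ i y + μ i x y)
    (heq1 : ∀ (k : ℕ) (x y z : g),
      ∑ p ∈ Finset.HasAntidiagonal.antidiagonal k,
        (μ p.1 x (μ p.2 y z) + μ p.1 y (μ p.2 z x) + μ p.1 z (μ p.2 x y)) = 0)
    (heq2 : ∀ (k : ℕ) (x y : g),
      ∑ p ∈ Finset.HasAntidiagonal.antidiagonal k, (μ p.1 (σ p.2 x) y + μ p.1 x (μ p.2 x y)) = 0)
    (heq3 : ∀ (k : ℕ) (x y : g),
      ∑ p ∈ Finset.HasAntidiagonal.antidiagonal k,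
        (Dd p.1 (μ p.2 x y) + μ p.2 (Dd p.1 x) y + μ p.2 x (Dd p.1 y)) = 0)
    (heq4 : ∀ (k : ℕ) (x : g),
      ∑ p ∈ Finset.HasAntidiagonal.antidiagonal k, (Dd p.1 (σ p.2 x) + μ p.2 x (Dd p.1 x)) = 0) :
    ∀ x y z : g,
      (⁅x, μ 1 y z⁆ + μ 1 x ⁅y, z⁆ + ⁅y, μ 1 z x⁆ + μ 1 y ⁅z, x⁆ +
          ⁅z, μ 1 x y⁆ + μ 1 z ⁅x, y⁆ = 0) ∧
      (⁅x, μ 1 x y⁆ + μ 1 (sq x) y + μ 1 ⁅x, y⁆ x + ⁅y, σ 1 x⁆ = 0) ∧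
      (Dd 1 ⁅x, y⁆ + ⁅x, Dd 1 y⁆ + ⁅y, Dd 1 x⁆ +
          μ 1 (D x) y + μ 1 x (D y) + D (μ 1 x y) = 0) ∧
      (Dd 1 (sq x) + ⁅x, Dd 1 x⁆ + D (σ 1 x) + μ 1 x (D x) = 0) :=
  stmt6_general sq D μ σ Dd hμ₁ hμ₂ hμalt hμ0 hσ0 hD0 heq1 heq2 heq3 heq4
end

section
/- Let ((g,[2]),D) be a ResLieDer pair over F, let n ≥ 1, and let (μ_i, σ_i, D_i)_{0≤i≤n} be a deformation of order n of ((g,[2]),D). Define the obstruction cochains by Ob_I³(x,y,z) = Σ_{i+j=n+1, i,j≥1} (μ_i(x,μ_j(y,z)) + μ_i(y,μ_j(z,x)) + μ_i(z,μ_j(x,y))), Ob_II³(x,y) = Σ_{i+j=n+1, i,j≥1} (μ_i(σ_j(x),y) + μ_i(x,μ_j(x,y))), Ob_I²(x,y) = Σ_{i+j=n+1, i,j≥1} (D_i(μ_j(x,y)) + μ_j(x,D_i(y)) + μ_j(y,D_i(x))), Ob_II²(x) = Σ_{i+j=n+1, i,j≥1} (D_i(σ_j(x)) + μ_j(x,D_i(x))).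 Then the deformation is extensible — i.e. there exist an alternating F-bilinear map μ_{n+1} : g×g → g, a map σ_{n+1} : g → g with σ_{n+1}(a·x) = a²·σ_{n+1}(x) and σ_{n+1}(x+y) = σ_{n+1}(x) + σ_{n+1}(y) + μ_{n+1}(x,y), and an F-linear map D_{n+1} : g → g such that the four deformation sum-equations also hold for k = n+1 — if and only if there exist an alternating F-bilinear map μ' : g×g → g, a map σ' : g → g with σ'(a·x) = a²·σ'(x) and σ'(x+y) = σ'(x) + σ'(y) + μ'(x,y), and an F-linear map D' : g → g with, for all x,y,z ∈ g: Ob_I³(x,y,z) = [x,μ'(y,z)] + [y,μ'(z,x)] + [z,μ'(x,y)] + μ'([x,y],z) + μ'([y,z],x) + μ'([z,x],y); Ob_II³(x,y) = [x,μ'(x,y)] + μ'(x^[2],y) + μ'([x,y],x) + [y,σ'(x)]; Ob_I²(x,y) = D'([x,y]) + [x,D'(y)] + [y,D'(x)] + D(μ'(x,y)) + μ'(D(x),y) + μ'(x,D(y)); Ob_II²(x) = D'(x^[2]) + [x,D'(x)] + D(σ'(x)) + μ'(x,D(x)). -/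
/-!
At order `n + 1`, each deformation sum splits into its two boundary terms, indexed by `(0, n + 1)`
and `(n + 1, 0)`, and the interior terms with both indices in `[1, n]`. Since updating the
families at `n + 1` does not affect the interior, the interior is the obstruction, while
`μ₀ = ⁅·, ·⁆`, `σ₀ = sq`, `D₀ = D` turn the boundary terms into the coboundary of
`(μ_{n+1}, σ_{n+1}, D_{n+1})`. In characteristic two, `boundary + interior = 0` says exactly that
the interior equals the boundary, and the bracket and all alternating maps are symmetric, which
absorbs the reordering of arguments.
-/

namespace CharTwo

variable (F : Type*) {M N : Type*} [Ring F] [CharP F 2]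

theorem module_neg_eq [AddCommGroup M] [Module F M] (x : M) : -x = x := by
  rw [neg_eq_iff_add_eq_zero, ← two_smul F x, two_eq_zero, zero_smul]

theorem module_add_eq_zero [AddCommGroup M] [Module F M] {x y : M} : x + y = 0 ↔ x = y := by
  rw [add_eq_zero_iff_eq_neg, module_neg_eq F]

theorem lie_comm [LieRing M] [Module F M] (x y : M) : ⁅x, y⁆ = ⁅y, x⁆ := by
  rw [← lie_skew, module_neg_eq F]

variable {F} in
theorem apply_comm_of_alternating [AddCommGroup M] [Module F M] [AddCommGroup N] [Module F N]
    {m : M → M → N} (h₁ : ∀ (a : F) (x x' y : M), m (a • x + x') y = a • m x y + m x' y)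
    (h₂ : ∀ (a : F) (x y y' : M), m x (a • y + y') = a • m x y + m x y')
    (halt : ∀ x, m x x = 0) (x y : M) : m x y = m y x := by
  have hadd₁ : ∀ x x' y, m (x + x') y = m x y + m x' y := by simpa using h₁ 1
  have hadd₂ : ∀ x y y', m x (y + y') = m x y + m x y' := by simpa using h₂ 1
  have := halt (x + y)
  rw [hadd₁, hadd₂, hadd₂, halt, halt, zero_add, add_zero] at this
  exact (module_add_eq_zero F).1 this

end CharTwo

namespace Finset.Nat

variable {M : Type*} [AddCommMonoid M]

theorem sum_antidiagonal_succ_eq_ends_add_interior (n : ℕ) (f : ℕ × ℕ → M) :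
    ∑ p ∈ antidiagonal (n + 1), f p =
      f (0, n + 1) + f (n + 1, 0) +
        ∑ p ∈ antidiagonal (n + 1), if 1 ≤ p.1 ∧ 1 ≤ p.2 then f p else 0 := by
  have hends : (antidiagonal (n + 1)).filter (fun p : ℕ × ℕ => ¬(1 ≤ p.1 ∧ 1 ≤ p.2)) =
      {(0, n + 1), (n + 1, 0)} := by
    ext p
    simp only [mem_filter, HasAntidiagonal.mem_antidiagonal, mem_insert, mem_singleton,
      Prod.ext_iff]
    omega
  rw [← sum_filter, ← sum_filter_not_add_sum_filter _ (fun p : ℕ × ℕ => 1 ≤ p.1 ∧ 1 ≤ p.2),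
    hends, sum_pair (by simp)]

theorem sum_antidiagonal_succ_interior_congr {n : ℕ} {f f' : ℕ × ℕ → M}
    (h : ∀ i j, i ≠ n + 1 → j ≠ n + 1 → f (i, j) = f' (i, j)) :
    (∑ p ∈ antidiagonal (n + 1), if 1 ≤ p.1 ∧ 1 ≤ p.2 then f p else 0) =
      ∑ p ∈ antidiagonal (n + 1), if 1 ≤ p.1 ∧ 1 ≤ p.2 then f' p else 0 := by
  refine sum_congr rfl fun p hp => if_ctx_congr Iff.rfl (fun _ => ?_) fun _ => rfl
  rw [HasAntidiagonal.mem_antidiagonal] at hp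
  exact h p.1 p.2 (by omega) (by omega)

end Finset.Nat

section Extension

open Finset Function

variable {g : Type*} [LieRing g] {μ : ℕ → g → g → g} {σ : ℕ → g → g} {n : ℕ}
  {μn : g → g → g} {σn : g → g}

theorem jacobi_update_eq_zero_iff (F : Type*) [Ring F] [CharP F 2] [Module F g]
    (hμ0 : ∀ x y, μ 0 x y = ⁅x, y⁆) (hμn : ∀ x y, μn x y = μn y x) (x y z : g) :
    ∑ p ∈ HasAntidiagonal.antidiagonal (n + 1),
        (update μ (n + 1) μn p.1 x (update μ (n + 1) μn p.2 y z) +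
          update μ (n + 1) μn p.1 y (update μ (n + 1) μn p.2 z x) +
          update μ (n + 1) μn p.1 z (update μ (n + 1) μn p.2 x y)) = 0 ↔
      (∑ p ∈ HasAntidiagonal.antidiagonal (n + 1),
        if 1 ≤ p.1 ∧ 1 ≤ p.2 then
          μ p.1 x (μ p.2 y z) + μ p.1 y (μ p.2 z x) + μ p.1 z (μ p.2 x y)
        else 0) =
        ⁅x, μn y z⁆ + ⁅y, μn z x⁆ + ⁅z, μn x y⁆ +
          μn ⁅x, y⁆ z + μn ⁅y, z⁆ x + μn ⁅z, x⁆ y := by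
  rw [Nat.sum_antidiagonal_succ_eq_ends_add_interior, add_comm, CharTwo.module_add_eq_zero F]
  refine iff_of_eq (congrArg₂ _ (Nat.sum_antidiagonal_succ_interior_congr fun i j hi hj => ?_) ?_)
  · simp only [update_of_ne hi, update_of_ne hj]
  · simp only [update_of_ne (Nat.succ_ne_zero n).symm, update_self, hμ0, hμn _ ⁅_, _⁆]
    abel

theorem squaring_update_eq_zero_iff (F : Type*) [Ring F] [CharP F 2] [Module F g]
    (sq : g → g) (hμ0 : ∀ x y, μ 0 x y = ⁅x, y⁆) (hσ0 : ∀ x, σ 0 x = sq x)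
    (hμn : ∀ x y, μn x y = μn y x) (x y : g) :
    ∑ p ∈ HasAntidiagonal.antidiagonal (n + 1),
        (update μ (n + 1) μn p.1 (update σ (n + 1) σn p.2 x) y +
          update μ (n + 1) μn p.1 x (update μ (n + 1) μn p.2 x y)) = 0 ↔
      (∑ p ∈ HasAntidiagonal.antidiagonal (n + 1),
        if 1 ≤ p.1 ∧ 1 ≤ p.2 then μ p.1 (σ p.2 x) y + μ p.1 x (μ p.2 x y) else 0) =
        ⁅x, μn x y⁆ + μn (sq x) y + μn ⁅x, y⁆ x + ⁅y, σn x⁆ := by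
  rw [Nat.sum_antidiagonal_succ_eq_ends_add_interior, add_comm, CharTwo.module_add_eq_zero F]
  refine iff_of_eq (congrArg₂ _ (Nat.sum_antidiagonal_succ_interior_congr fun i j hi hj => ?_) ?_)
  · simp only [update_of_ne hi, update_of_ne hj]
  · simp only [update_of_ne (Nat.succ_ne_zero n).symm, update_self, hμ0, hσ0, hμn _ ⁅_, _⁆,
      CharTwo.lie_comm F (σn x)]
    abel

variable {F : Type*} [Ring F] [CharP F 2] [Module F g] {Dd : ℕ → g →ₗ[F] g}
  {Dn : g →ₗ[F] g}

theorem derivation_update_eq_zero_iff (D : g →ₗ[F] g) (hμ : ∀ i x y, μ i x y = μ i y x)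
    (hμ0 : ∀ x y, μ 0 x y = ⁅x, y⁆) (hD0 : Dd 0 = D) (x y : g) :
    ∑ p ∈ HasAntidiagonal.antidiagonal (n + 1),
        (update Dd (n + 1) Dn p.1 (update μ (n + 1) μn p.2 x y) +
          update μ (n + 1) μn p.2 (update Dd (n + 1) Dn p.1 x) y +
          update μ (n + 1) μn p.2 x (update Dd (n + 1) Dn p.1 y)) = 0 ↔
      (∑ p ∈ HasAntidiagonal.antidiagonal (n + 1),
        if 1 ≤ p.1 ∧ 1 ≤ p.2 then
          Dd p.1 (μ p.2 x y) + μ p.2 x (Dd p.1 y) + μ p.2 y (Dd p.1 x)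
        else 0) =
        Dn ⁅x, y⁆ + ⁅x, Dn y⁆ + ⁅y, Dn x⁆ +
          D (μn x y) + μn (D x) y + μn x (D y) := by
  subst hD0
  rw [Nat.sum_antidiagonal_succ_eq_ends_add_interior, add_comm, CharTwo.module_add_eq_zero F]
  refine iff_of_eq (congrArg₂ _ (Nat.sum_antidiagonal_succ_interior_congr fun i j hi hj => ?_) ?_)
  · simp only [update_of_ne hi, update_of_ne hj, hμ j (Dd i x) y]
    abel
  · simp only [update_of_ne (Nat.succ_ne_zero n).symm, update_self, hμ0,
      CharTwo.lie_comm F (Dn x)]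
    abel

theorem derivation_squaring_update_eq_zero_iff (sq : g → g) (D : g →ₗ[F] g)
    (hμ0 : ∀ x y, μ 0 x y = ⁅x, y⁆) (hσ0 : ∀ x, σ 0 x = sq x) (hD0 : Dd 0 = D) (x : g) :
    ∑ p ∈ HasAntidiagonal.antidiagonal (n + 1),
        (update Dd (n + 1) Dn p.1 (update σ (n + 1) σn p.2 x) +
          update μ (n + 1) μn p.2 x (update Dd (n + 1) Dn p.1 x)) = 0 ↔
      (∑ p ∈ HasAntidiagonal.antidiagonal (n + 1),
        if 1 ≤ p.1 ∧ 1 ≤ p.2 then Dd p.1 (σ p.2 x) + μ p.2 x (Dd p.1 x) else 0) =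
        Dn (sq x) + ⁅x, Dn x⁆ + D (σn x) + μn x (D x) := by
  subst hD0
  rw [Nat.sum_antidiagonal_succ_eq_ends_add_interior, add_comm, CharTwo.module_add_eq_zero F]
  refine iff_of_eq (congrArg₂ _ (Nat.sum_antidiagonal_succ_interior_congr fun i j hi hj => ?_) ?_)
  · simp only [update_of_ne hi, update_of_ne hj]
  · simp only [update_of_ne (Nat.succ_ne_zero n).symm, update_self, hμ0, hσ0]
    abel

end Extension

theorem stmt9_general
    {F : Type*} [Field F] [CharP F 2]
    {g : Type*} [LieRing g] [LieAlgebra F g]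
    (sq : g → g)
    (D : g →ₗ[F] g)
    (n : ℕ)
    -- a deformation of order n: families indexed by 0 ≤ i ≤ n
    (μ : ℕ → g → g → g) (σ : ℕ → g → g) (Dd : ℕ → g →ₗ[F] g)
    (hμ₁ : ∀ (i : ℕ) (a : F) (x x' y : g), μ i (a • x + x') y = a • μ i x y + μ i x' y)
    (hμ₂ : ∀ (i : ℕ) (a : F) (x y y' : g), μ i x (a • y + y') = a • μ i x y + μ i x y')
    (hμalt : ∀ (i : ℕ) (x : g), μ i x x = 0)
    (hμ0 : ∀ x y : g, μ 0 x y = ⁅x, y⁆)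
    (hσ0 : ∀ x : g, σ 0 x = sq x)
    (hD0 : Dd 0 = D) :
    -- the obstruction cochains
    (let ObI3 : g → g → g → g := fun x y z =>
      ∑ p ∈ Finset.HasAntidiagonal.antidiagonal (n + 1),
        if 1 ≤ p.1 ∧ 1 ≤ p.2 then
          μ p.1 x (μ p.2 y z) + μ p.1 y (μ p.2 z x) + μ p.1 z (μ p.2 x y)
        else 0
     let ObII3 : g → g → g := fun x y =>
      ∑ p ∈ Finset.HasAntidiagonal.antidiagonal (n + 1),
        if 1 ≤ p.1 ∧ 1 ≤ p.2 then μ p.1 (σ p.2 x) y + μ p.1 x (μ p.2 x y) else 0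
     let ObI2 : g → g → g := fun x y =>
      ∑ p ∈ Finset.HasAntidiagonal.antidiagonal (n + 1),
        if 1 ≤ p.1 ∧ 1 ≤ p.2 then
          Dd p.1 (μ p.2 x y) + μ p.2 x (Dd p.1 y) + μ p.2 y (Dd p.1 x)
        else 0
     let ObII2 : g → g := fun x =>
      ∑ p ∈ Finset.HasAntidiagonal.antidiagonal (n + 1),
        if 1 ≤ p.1 ∧ 1 ≤ p.2 then Dd p.1 (σ p.2 x) + μ p.2 x (Dd p.1 x) else 0
     -- extensibility:
     (∃ (μn : g → g → g) (σn : g → g) (Dn : g →ₗ[F] g),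
        (∀ (a : F) (x x' y : g), μn (a • x + x') y = a • μn x y + μn x' y) ∧
        (∀ (a : F) (x y y' : g), μn x (a • y + y') = a • μn x y + μn x y') ∧
        (∀ x : g, μn x x = 0) ∧
        (∀ (a : F) (x : g), σn (a • x) = a ^ 2 • σn x) ∧
        (∀ x y : g, σn (x + y) = σn x + σn y + μn x y) ∧
        -- the four deformation equations also hold for k = n + 1, for the extended family
        (let μe := Function.update μ (n + 1) μn
         let σe := Function.update σ (n + 1) σn
         let De := Function.update Dd (n + 1) Dn
         ∀ x y z : g,
          (∑ p ∈ Finset.HasAntidiagonal.antidiagonal (n + 1),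
            (μe p.1 x (μe p.2 y z) + μe p.1 y (μe p.2 z x) + μe p.1 z (μe p.2 x y)) = 0) ∧
          (∑ p ∈ Finset.HasAntidiagonal.antidiagonal (n + 1),
            (μe p.1 (σe p.2 x) y + μe p.1 x (μe p.2 x y)) = 0) ∧
          (∑ p ∈ Finset.HasAntidiagonal.antidiagonal (n + 1),
            (De p.1 (μe p.2 x y) + μe p.2 (De p.1 x) y + μe p.2 x (De p.1 y)) = 0) ∧
          (∑ p ∈ Finset.HasAntidiagonal.antidiagonal (n + 1),
            (De p.1 (σe p.2 x) + μe p.2 x (De p.1 x)) = 0))) ↔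
      -- the obstruction class is trivial:
      (∃ (μ' : g → g → g) (σ' : g → g) (D' : g →ₗ[F] g),
        (∀ (a : F) (x x' y : g), μ' (a • x + x') y = a • μ' x y + μ' x' y) ∧
        (∀ (a : F) (x y y' : g), μ' x (a • y + y') = a • μ' x y + μ' x y') ∧
        (∀ x : g, μ' x x = 0) ∧
        (∀ (a : F) (x : g), σ' (a • x) = a ^ 2 • σ' x) ∧
        (∀ x y : g, σ' (x + y) = σ' x + σ' y + μ' x y) ∧
        (∀ x y z : g,
          ObI3 x y z =
            ⁅x, μ' y z⁆ + ⁅y, μ' z x⁆ + ⁅z, μ' x y⁆ +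
              μ' ⁅x, y⁆ z + μ' ⁅y, z⁆ x + μ' ⁅z, x⁆ y) ∧
        (∀ x y : g,
          ObII3 x y = ⁅x, μ' x y⁆ + μ' (sq x) y + μ' ⁅x, y⁆ x + ⁅y, σ' x⁆) ∧
        (∀ x y : g,
          ObI2 x y =
            D' ⁅x, y⁆ + ⁅x, D' y⁆ + ⁅y, D' x⁆ +
              D (μ' x y) + μ' (D x) y + μ' x (D y)) ∧
        (∀ x : g,
          ObII2 x = D' (sq x) + ⁅x, D' x⁆ + D (σ' x) + μ' x (D x)))) := by
  intro ObI3 ObII3 ObI2 ObII2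
  have hμ i := CharTwo.apply_comm_of_alternating (hμ₁ i) (hμ₂ i) (hμalt i)
  constructor
  · rintro ⟨μn, σn, Dn, h₁, h₂, halt, hs₁, hs₂, hext⟩
    have hμn := CharTwo.apply_comm_of_alternating h₁ h₂ halt
    refine ⟨μn, σn, Dn, h₁, h₂, halt, hs₁, hs₂, fun x y z => ?_, fun x y => ?_, fun x y => ?_,
      fun x => ?_⟩
    · exact (jacobi_update_eq_zero_iff F hμ0 hμn x y z).1 (hext x y z).1
    · exact (squaring_update_eq_zero_iff F sq hμ0 hσ0 hμn x y).1 (hext x y x).2.1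
    · exact (derivation_update_eq_zero_iff D hμ hμ0 hD0 x y).1 (hext x y x).2.2.1
    · exact (derivation_squaring_update_eq_zero_iff sq D hμ0 hσ0 hD0 x).1 (hext x x x).2.2.2
  · rintro ⟨μ', σ', D', h₁, h₂, halt, hs₁, hs₂, hOb₁, hOb₂, hOb₃, hOb₄⟩
    have hμ' := CharTwo.apply_comm_of_alternating h₁ h₂ halt
    refine ⟨μ', σ', D', h₁, h₂, halt, hs₁, hs₂, fun x y z => ⟨?_, ?_, ?_, ?_⟩⟩
    · exact (jacobi_update_eq_zero_iff F hμ0 hμ' x y z).2 (hOb₁ x y z)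
    · exact (squaring_update_eq_zero_iff F sq hμ0 hσ0 hμ' x y).2 (hOb₂ x y)
    · exact (derivation_update_eq_zero_iff D hμ hμ0 hD0 x y).2 (hOb₃ x y)
    · exact (derivation_squaring_update_eq_zero_iff sq D hμ0 hσ0 hD0 x).2 (hOb₄ x)

/-- a deformation of order `n` of a ResLieDer pair is extensible if and only
if its obstruction class is trivial (the obstruction cochain is a coboundary). -/
theorem stmt9
    {F : Type*} [Field F] [CharP F 2]
    {g : Type*} [LieRing g] [LieAlgebra F g]
    (sq : g → g)
    (hsq_ad : ∀ x y : g, ⁅sq x, y⁆ = ⁅x, ⁅x, y⁆⁆)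
    (hsq_smul : ∀ (a : F) (x : g), sq (a • x) = a ^ 2 • sq x)
    (hsq_add : ∀ x y : g, sq (x + y) = sq x + sq y + ⁅x, y⁆)
    (D : g →ₗ[F] g)
    (hD_br : ∀ x y : g, D ⁅x, y⁆ = ⁅D x, y⁆ + ⁅x, D y⁆)
    (hD_sq : ∀ x : g, D (sq x) = ⁅x, D x⁆)
    (n : ℕ) (hn : 1 ≤ n)
    -- a deformation of order n: families indexed by 0 ≤ i ≤ n
    (μ : ℕ → g → g → g) (σ : ℕ → g → g) (Dd : ℕ → g →ₗ[F] g)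
    (hμ₁ : ∀ (i : ℕ) (a : F) (x x' y : g), μ i (a • x + x') y = a • μ i x y + μ i x' y)
    (hμ₂ : ∀ (i : ℕ) (a : F) (x y y' : g), μ i x (a • y + y') = a • μ i x y + μ i x y')
    (hμalt : ∀ (i : ℕ) (x : g), μ i x x = 0)
    (hμ0 : ∀ x y : g, μ 0 x y = ⁅x, y⁆)
    (hσ0 : ∀ x : g, σ 0 x = sq x)
    (hD0 : Dd 0 = D)
    (hσ_smul : ∀ (i : ℕ) (a : F) (x : g), σ i (a • x) = a ^ 2 • σ i x)
    (hσ_add : ∀ (i : ℕ) (x y : g), σ i (x + y) = σ i x + σ i y + μ i x y)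
    (heq1 : ∀ k ≤ n, ∀ x y z : g,
      ∑ p ∈ Finset.HasAntidiagonal.antidiagonal k,
        (μ p.1 x (μ p.2 y z) + μ p.1 y (μ p.2 z x) + μ p.1 z (μ p.2 x y)) = 0)
    (heq2 : ∀ k ≤ n, ∀ x y : g,
      ∑ p ∈ Finset.HasAntidiagonal.antidiagonal k, (μ p.1 (σ p.2 x) y + μ p.1 x (μ p.2 x y)) = 0)
    (heq3 : ∀ k ≤ n, ∀ x y : g,
      ∑ p ∈ Finset.HasAntidiagonal.antidiagonal k,
        (Dd p.1 (μ p.2 x y) + μ p.2 (Dd p.1 x) y + μ p.2 x (Dd p.1 y)) = 0)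
    (heq4 : ∀ k ≤ n, ∀ x : g,
      ∑ p ∈ Finset.HasAntidiagonal.antidiagonal k, (Dd p.1 (σ p.2 x) + μ p.2 x (Dd p.1 x)) = 0) :
    -- the obstruction cochains
    (let ObI3 : g → g → g → g := fun x y z =>
      ∑ p ∈ Finset.HasAntidiagonal.antidiagonal (n + 1),
        if 1 ≤ p.1 ∧ 1 ≤ p.2 then
          μ p.1 x (μ p.2 y z) + μ p.1 y (μ p.2 z x) + μ p.1 z (μ p.2 x y)
        else 0
     let ObII3 : g → g → g := fun x y =>
      ∑ p ∈ Finset.HasAntidiagonal.antidiagonal (n + 1),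
        if 1 ≤ p.1 ∧ 1 ≤ p.2 then μ p.1 (σ p.2 x) y + μ p.1 x (μ p.2 x y) else 0
     let ObI2 : g → g → g := fun x y =>
      ∑ p ∈ Finset.HasAntidiagonal.antidiagonal (n + 1),
        if 1 ≤ p.1 ∧ 1 ≤ p.2 then
          Dd p.1 (μ p.2 x y) + μ p.2 x (Dd p.1 y) + μ p.2 y (Dd p.1 x)
        else 0
     let ObII2 : g → g := fun x =>
      ∑ p ∈ Finset.HasAntidiagonal.antidiagonal (n + 1),
        if 1 ≤ p.1 ∧ 1 ≤ p.2 then Dd p.1 (σ p.2 x) + μ p.2 x (Dd p.1 x) else 0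
     -- extensibility:
     (∃ (μn : g → g → g) (σn : g → g) (Dn : g →ₗ[F] g),
        (∀ (a : F) (x x' y : g), μn (a • x + x') y = a • μn x y + μn x' y) ∧
        (∀ (a : F) (x y y' : g), μn x (a • y + y') = a • μn x y + μn x y') ∧
        (∀ x : g, μn x x = 0) ∧
        (∀ (a : F) (x : g), σn (a • x) = a ^ 2 • σn x) ∧
        (∀ x y : g, σn (x + y) = σn x + σn y + μn x y) ∧
        -- the four deformation equations also hold for k = n + 1, for the extended family
        (let μe := Function.update μ (n + 1) μn
         let σe := Function.update σ (n + 1) σn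
         let De := Function.update Dd (n + 1) Dn
         ∀ x y z : g,
          (∑ p ∈ Finset.HasAntidiagonal.antidiagonal (n + 1),
            (μe p.1 x (μe p.2 y z) + μe p.1 y (μe p.2 z x) + μe p.1 z (μe p.2 x y)) = 0) ∧
          (∑ p ∈ Finset.HasAntidiagonal.antidiagonal (n + 1),
            (μe p.1 (σe p.2 x) y + μe p.1 x (μe p.2 x y)) = 0) ∧
          (∑ p ∈ Finset.HasAntidiagonal.antidiagonal (n + 1),
            (De p.1 (μe p.2 x y) + μe p.2 (De p.1 x) y + μe p.2 x (De p.1 y)) = 0) ∧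
          (∑ p ∈ Finset.HasAntidiagonal.antidiagonal (n + 1),
            (De p.1 (σe p.2 x) + μe p.2 x (De p.1 x)) = 0))) ↔
      -- the obstruction class is trivial:
      (∃ (μ' : g → g → g) (σ' : g → g) (D' : g →ₗ[F] g),
        (∀ (a : F) (x x' y : g), μ' (a • x + x') y = a • μ' x y + μ' x' y) ∧
        (∀ (a : F) (x y y' : g), μ' x (a • y + y') = a • μ' x y + μ' x y') ∧
        (∀ x : g, μ' x x = 0) ∧
        (∀ (a : F) (x : g), σ' (a • x) = a ^ 2 • σ' x) ∧
        (∀ x y : g, σ' (x + y) = σ' x + σ' y + μ' x y) ∧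
        (∀ x y z : g,
          ObI3 x y z =
            ⁅x, μ' y z⁆ + ⁅y, μ' z x⁆ + ⁅z, μ' x y⁆ +
              μ' ⁅x, y⁆ z + μ' ⁅y, z⁆ x + μ' ⁅z, x⁆ y) ∧
        (∀ x y : g,
          ObII3 x y = ⁅x, μ' x y⁆ + μ' (sq x) y + μ' ⁅x, y⁆ x + ⁅y, σ' x⁆) ∧
        (∀ x y : g,
          ObI2 x y =
            D' ⁅x, y⁆ + ⁅x, D' y⁆ + ⁅y, D' x⁆ +
              D (μ' x y) + μ' (D x) y + μ' x (D y)) ∧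
        (∀ x : g,
          ObII2 x = D' (sq x) + ⁅x, D' x⁆ + D (σ' x) + μ' x (D x)))) :=
  stmt9_general sq D n μ σ Dd hμ₁ hμ₂ hμalt hμ0 hσ0 hD0
end

section
/- Let ((g,[2]_g),D_g) be a ResLieDer pair over F and ((h,[2]_h),D_h) a strongly abelian ResLieDer pair over F. Let ψ : g×g → h be alternating F-bilinear, let ς : g → h satisfy ς(a·x) = a²·ς(x) and ς(x+y) = ς(x) + ς(y) + ψ(x,y), and let τ : g → h be F-linear. On g ⊕ h define [x+h₁, y+h₂]_ψ = [x,y] + ψ(x,y), (x+h)^[2]_ς = x^[2]_g + ς(x), and D_τ(x+h) = D_g(x) + τ(x) + D_h(h). Then ((g ⊕ h, [·,·]_ψ, [2]_ς), D_τ) is a ResLieDer pair if and only if for all x,y,z ∈ g: ψ(x,[y,z]) + ψ(y,[z,x]) + ψ(z,[x,y]) = 0; ψ(x^[2]_g, y) + ψ([x,y], x) = 0; τ([x,y]) + D_h(ψ(x,y)) + ψ(D_g(x),y) + ψ(x,D_g(y)) = 0; and τ(x^[2]_g) + D_h(ς(x)) + ψ(x,D_g(x)) = 0. -/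
/-!
On `g ⊕ h` every structure map only reads the `g`-component of its arguments, so each
ResLieDer axiom splits into a `g`-component, which is the corresponding axiom of
`((g, [2]), D_g)`, and an `h`-component, which is one of the cocycle identities. In
characteristic 2, `u + v = 0` is `u = v`, and the alternating form `ψ` is symmetric, which
turns `ψ x [x, y]` (from `[x^[2], y] = [x, [x, y]]`) into `ψ [x, y] x`.
-/

theorem CharTwo.module_add_eq_zero_s11 (F : Type*) {M : Type*} [Ring F] [CharP F 2] [AddCommGroup M]
    [Module F M] {a b : M} : a + b = 0 ↔ a = b := by
  rw [add_eq_zero_iff_eq_neg, ← neg_one_smul F b, CharTwo.neg_eq, one_smul]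

theorem add_apply_swap_eq_zero_of_apply_self {G H : Type*} [AddCommGroup G] [AddCommGroup H]
    (ψ : G → G → H) (hadd₁ : ∀ x x' y, ψ (x + x') y = ψ x y + ψ x' y)
    (hadd₂ : ∀ x y y', ψ x (y + y') = ψ x y + ψ x y') (hself : ∀ x, ψ x x = 0) (x y : G) :
    ψ x y + ψ y x = 0 := by
  simpa [hadd₁, hadd₂, hself] using hself (x + y)

/-- the data `(ψ, ς, τ)` makes `((g ⊕ h, [·,·]_ψ, [2]_ς), D_τ)` a ResLieDer
pair if and only if `((ψ,ς),τ)` is a 2-cocycle with values in the trivial representation. -/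
theorem stmt11
    {F : Type*} [Field F] [CharP F 2]
    {g : Type*} [LieRing g] [LieAlgebra F g]
    {h : Type*} [AddCommGroup h] [Module F h]
    -- ResLieDer pair structure on g
    (sq : g → g)
    (hsq_ad : ∀ x y : g, ⁅sq x, y⁆ = ⁅x, ⁅x, y⁆⁆)
    (hsq_smul : ∀ (a : F) (x : g), sq (a • x) = a ^ 2 • sq x)
    (hsq_add : ∀ x y : g, sq (x + y) = sq x + sq y + ⁅x, y⁆)
    (Dg : g →ₗ[F] g)
    (hDg_br : ∀ x y : g, Dg ⁅x, y⁆ = ⁅Dg x, y⁆ + ⁅x, Dg y⁆)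
    (hDg_sq : ∀ x : g, Dg (sq x) = ⁅x, Dg x⁆)
    -- strongly abelian ResLieDer pair structure on h: zero bracket, zero 2-mapping,
    -- together with an arbitrary linear map Dh
    (Dh : h →ₗ[F] h)
    -- the cochain data (ψ, ς, τ)
    (ψ : g → g → h)
    (hψ₁ : ∀ (a : F) (x x' y : g), ψ (a • x + x') y = a • ψ x y + ψ x' y)
    (hψ₂ : ∀ (a : F) (x y y' : g), ψ x (a • y + y') = a • ψ x y + ψ x y')
    (hψalt : ∀ x : g, ψ x x = 0)
    (ς : g → h)
    (hς_smul : ∀ (a : F) (x : g), ς (a • x) = a ^ 2 • ς x)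
    (hς_add : ∀ x y : g, ς (x + y) = ς x + ς y + ψ x y)
    (τ : g →ₗ[F] h) :
    -- the structure maps on g ⊕ h
    (let br : g × h → g × h → g × h := fun p q => (⁅p.1, q.1⁆, ψ p.1 q.1)
     let sqς : g × h → g × h := fun p => (sq p.1, ς p.1)
     let Dτ : g × h → g × h := fun p => (Dg p.1, τ p.1 + Dh p.2)
     -- ((g ⊕ h, br, sqς), Dτ) is a ResLieDer pair:
     (((∀ p q r : g × h, br p (br q r) + br q (br r p) + br r (br p q) = 0) ∧
       (∀ p q : g × h, br (sqς p) q = br p (br p q)) ∧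
       (∀ (a : F) (p : g × h), sqς (a • p) = a ^ 2 • sqς p) ∧
       (∀ p q : g × h, sqς (p + q) = sqς p + sqς q + br p q) ∧
       (∀ p q : g × h, Dτ (br p q) = br (Dτ p) q + br p (Dτ q)) ∧
       (∀ p : g × h, Dτ (sqς p) = br p (Dτ p))) ↔
      -- if and only if ((ψ,ς),τ) is a 2-cocycle with trivial coefficients:
      ((∀ x y z : g, ψ x ⁅y, z⁆ + ψ y ⁅z, x⁆ + ψ z ⁅x, y⁆ = 0) ∧
       (∀ x y : g, ψ (sq x) y + ψ ⁅x, y⁆ x = 0) ∧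
       (∀ x y : g, τ ⁅x, y⁆ + Dh (ψ x y) + ψ (Dg x) y + ψ x (Dg y) = 0) ∧
       (∀ x : g, τ (sq x) + Dh (ς x) + ψ x (Dg x) = 0)))) := by
  have hadd₁ (x x' y : g) : ψ (x + x') y = ψ x y + ψ x' y := by simpa using hψ₁ 1 x x' y
  have hadd₂ (x y y' : g) : ψ x (y + y') = ψ x y + ψ x y' := by simpa using hψ₂ 1 x y y'
  have hsymm (x y : g) : ψ x y = ψ y x :=
    (CharTwo.module_add_eq_zero_s11 F).1 <|
      add_apply_swap_eq_zero_of_apply_self ψ hadd₁ hadd₂ hψalt x y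
  intro br sqς Dτ
  simp only [br, sqς, Dτ, Prod.ext_iff, Prod.forall, Prod.fst_add, Prod.snd_add, Prod.smul_fst,
    Prod.smul_snd, Prod.fst_zero, Prod.snd_zero, lie_jacobi, hsq_ad, hsq_smul, hς_smul, hsq_add,
    hς_add, hDg_br, hDg_sq, true_and, and_self, forall_const]
  refine and_congr Iff.rfl (and_congr ?_ (and_congr ?_ ?_))
  · refine forall₂_congr fun x y => ?_
    rw [CharTwo.module_add_eq_zero_s11 F, hsymm ⁅x, y⁆ x]
  · refine forall₂_congr fun x y => ?_
    rw [add_assoc _ (ψ (Dg x) y), CharTwo.module_add_eq_zero_s11 F]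
  · exact forall_congr' fun x => (CharTwo.module_add_eq_zero_s11 F).symm
end

section
/- Let ((ĝ,[2]_ĝ),D_ĝ) be a central extension of the ResLieDer pair ((g,[2]_g),D_g) by the strongly abelian ResLieDer pair ((h,[2]_h),D_h), with projection θ : ĝ → g. For a section s of θ define ψ_s(x,y) = [s(x),s(y)] + s([x,y]), ς_s(x) = s(x)^[2]_ĝ + s(x^[2]_g), and τ_s(x) = D_ĝ(s(x)) + s(D_g(x)), all taking values in the kernel h. Then for any two sections s₁, s₂ of θ, setting κ = s₁ − s₂ : g → h, one has for all x,y ∈ g: ψ_{s₁}(x,y) = ψ_{s₂}(x,y) + κ([x,y]); ς_{s₁}(x) = ς_{s₂}(x) + κ(x^[2]_g); τ_{s₁}(x) = τ_{s₂}(x) + D_h(κ(x)) + κ(D_g(x)). In particular the cohomology class of ((ψ_s,ς_s),τ_s) does not depend on the choice of section. -/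
/-- for a central extension of ResLieDer pairs, the 2-cocycle
`((ψ_s, ς_s), τ_s)` associated with a section `s` takes values in the kernel, and for two
sections `s₁, s₂` the cocycles differ by the coboundary of `κ = s₁ - s₂`; hence the
cohomology class does not depend on the choice of section.  The strongly abelian kernel
`h = ker θ` sits inside `gh`, and `D_h` is the restriction of `D_gh` to the kernel. -/
theorem stmt12
    {F : Type*} [Field F] [CharP F 2]
    {g : Type*} [LieRing g] [LieAlgebra F g]
    {gh : Type*} [LieRing gh] [LieAlgebra F gh]
    -- ResLieDer pair structure on g
    (sqg : g → g)
    (hsqg_ad : ∀ x y : g, ⁅sqg x, y⁆ = ⁅x, ⁅x, y⁆⁆)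
    (hsqg_smul : ∀ (a : F) (x : g), sqg (a • x) = a ^ 2 • sqg x)
    (hsqg_add : ∀ x y : g, sqg (x + y) = sqg x + sqg y + ⁅x, y⁆)
    (Dg : g →ₗ[F] g)
    (hDg_br : ∀ x y : g, Dg ⁅x, y⁆ = ⁅Dg x, y⁆ + ⁅x, Dg y⁆)
    (hDg_sq : ∀ x : g, Dg (sqg x) = ⁅x, Dg x⁆)
    -- ResLieDer pair structure on gh
    (sqgh : gh → gh)
    (hsqgh_ad : ∀ u v : gh, ⁅sqgh u, v⁆ = ⁅u, ⁅u, v⁆⁆)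
    (hsqgh_smul : ∀ (a : F) (u : gh), sqgh (a • u) = a ^ 2 • sqgh u)
    (hsqgh_add : ∀ u v : gh, sqgh (u + v) = sqgh u + sqgh v + ⁅u, v⁆)
    (Dgh : gh →ₗ[F] gh)
    (hDgh_br : ∀ u v : gh, Dgh ⁅u, v⁆ = ⁅Dgh u, v⁆ + ⁅u, Dgh v⁆)
    (hDgh_sq : ∀ u : gh, Dgh (sqgh u) = ⁅u, Dgh u⁆)
    -- θ : gh → g is a surjective morphism of ResLieDer pairs
    (θ : gh →ₗ⁅F⁆ g)
    (hθsurj : Function.Surjective θ)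
    (hθsq : ∀ u : gh, θ (sqgh u) = sqg (θ u))
    (hθD : ∀ u : gh, θ (Dgh u) = Dg (θ u))
    -- the extension is central, with strongly abelian kernel h = ker θ
    (hcentral : ∀ u : gh, θ u = 0 → ∀ v : gh, ⁅u, v⁆ = 0)
    (hker_sq : ∀ u : gh, θ u = 0 → sqgh u = 0)
    -- two sections of θ
    (s₁ s₂ : g →ₗ[F] gh)
    (hs₁ : ∀ x : g, θ (s₁ x) = x)
    (hs₂ : ∀ x : g, θ (s₂ x) = x) :
    -- ψ_{s₁}, ς_{s₁}, τ_{s₁} take values in the kernel h: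
    ((∀ x y : g, θ (⁅s₁ x, s₁ y⁆ + s₁ ⁅x, y⁆) = 0) ∧
     (∀ x : g, θ (sqgh (s₁ x) + s₁ (sqg x)) = 0) ∧
     (∀ x : g, θ (Dgh (s₁ x) + s₁ (Dg x)) = 0)) ∧
    -- comparison of the cocycles of the two sections via κ = s₁ - s₂:
    ((∀ x y : g,
        ⁅s₁ x, s₁ y⁆ + s₁ ⁅x, y⁆ =
          (⁅s₂ x, s₂ y⁆ + s₂ ⁅x, y⁆) + (s₁ - s₂) ⁅x, y⁆) ∧
     (∀ x : g,
        sqgh (s₁ x) + s₁ (sqg x) =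
          (sqgh (s₂ x) + s₂ (sqg x)) + (s₁ - s₂) (sqg x)) ∧
     (∀ x : g,
        Dgh (s₁ x) + s₁ (Dg x) =
          (Dgh (s₂ x) + s₂ (Dg x)) + (Dgh ((s₁ - s₂) x) + (s₁ - s₂) (Dg x)))) := by

  have hg2 : ∀ x : g, x + x = 0 := fun x => by
    rw [← two_smul F x, show (2:F) = 0 by exact_mod_cast CharP.cast_eq_zero F 2, zero_smul]
  have h2 : ∀ u : gh, u + u = 0 := fun u => by
    rw [← two_smul F u, show (2:F) = 0 by exact_mod_cast CharP.cast_eq_zero F 2, zero_smul]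
  have hneg : ∀ u : gh, -u = u := fun u => by
    rw [neg_eq_iff_add_eq_zero, h2]
  have hκ : ∀ x : g, θ ((s₁ - s₂) x) = 0 := fun x => by
    simp [hs₁, hs₂, sub_self]
  have hcentral' : ∀ u v : gh, θ v = 0 → ⁅u, v⁆ = 0 := fun u v h => by
    rw [← lie_skew, hcentral v h, neg_zero]
  have hs₁eq : ∀ x : g, s₁ x = s₂ x + (s₁ - s₂) x := fun x => by
    rw [LinearMap.sub_apply]; abel
  refine ⟨⟨fun x y => ?_, fun x => ?_, fun x => ?_⟩, fun x y => ?_, fun x => ?_, fun x => ?_⟩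
  · simp [hs₁, hg2]
  · simp [hθsq, hs₁, hg2]
  · simp [hθD, hs₁, hg2]
  · rw [hs₁eq x, hs₁eq y, hs₁eq ⁅x, y⁆, lie_add, add_lie, add_lie]
    simp only [hcentral _ (hκ x), hcentral' _ _ (hκ y)]
    abel
  · rw [hs₁eq x, hsqgh_add, hker_sq _ (hκ x),
      hcentral' _ _ (hκ x), hs₁eq (sqg x)]
    abel
  · rw [hs₁eq x, map_add, hs₁eq (Dg x)]
    abel
end

section
/- Let ((g,[2]_g),D_g) be a ResLieDer pair over F and ((h,[2]_h),D_h) a strongly abelian ResLieDer pair. Let ((ψ₁,ς₁),τ₁) and ((ψ₂,ς₂),τ₂) both satisfy the 2-cocycle equations with values in the trivial representation (for all x,y,z ∈ g: ψ(x,[y,z]) + ψ(y,[z,x]) + ψ(z,[x,y]) = 0; ψ(x^[2]_g,y) + ψ([x,y],x) = 0; τ([x,y]) + D_h(ψ(x,y)) + ψ(D_g(x),y) + ψ(x,D_g(y)) = 0; τ(x^[2]_g) + D_h(ς(x)) + ψ(x,D_g(x)) = 0), and suppose there is an F-linear map ν : g → h with ψ₁(x,y) = ψ₂(x,y) + ν([x,y]),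 ς₁(x) = ς₂(x) + ν(x^[2]_g), and τ₁(x) = τ₂(x) + D_h(ν(x)) + ν(D_g(x)) for all x,y ∈ g. Then the map ϱ : g ⊕ h → g ⊕ h, ϱ(x+h) = x + ν(x) + h, is an isomorphism of ResLieDer pairs from ((g⊕h, [·,·]_{ψ₁}, [2]_{ς₁}), D_{τ₁}) to ((g⊕h, [·,·]_{ψ₂}, [2]_{ς₂}), D_{τ₂}) that restricts to the identity on h and induces the identity on g (an isomorphism of central extensions). -/
/-- cohomologous 2-cocycles give isomorphic central extensions: if
`((ψ₁,ς₁),τ₁)` and `((ψ₂,ς₂),τ₂)` differ by the coboundary of `ν`, then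
`ϱ(x+h) = x + ν(x) + h` is an isomorphism of ResLieDer pairs between the corresponding
semidirect-sum structures on `g ⊕ h`, restricting to the identity on `h` and inducing
the identity on `g`. -/
theorem stmt14
    {F : Type*} [Field F] [CharP F 2]
    {g : Type*} [LieRing g] [LieAlgebra F g]
    {h : Type*} [AddCommGroup h] [Module F h]
    -- ResLieDer pair structure on g
    (sq : g → g)
    (hsq_ad : ∀ x y : g, ⁅sq x, y⁆ = ⁅x, ⁅x, y⁆⁆)
    (hsq_smul : ∀ (a : F) (x : g), sq (a • x) = a ^ 2 • sq x)
    (hsq_add : ∀ x y : g, sq (x + y) = sq x + sq y + ⁅x, y⁆)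
    (Dg : g →ₗ[F] g)
    (hDg_br : ∀ x y : g, Dg ⁅x, y⁆ = ⁅Dg x, y⁆ + ⁅x, Dg y⁆)
    (hDg_sq : ∀ x : g, Dg (sq x) = ⁅x, Dg x⁆)
    -- strongly abelian ResLieDer pair structure on h
    (Dh : h →ₗ[F] h)
    -- first 2-cocycle ((ψ₁,ς₁),τ₁)
    (ψ₁ : g → g → h)
    (hψ₁₁ : ∀ (a : F) (x x' y : g), ψ₁ (a • x + x') y = a • ψ₁ x y + ψ₁ x' y)
    (hψ₁₂ : ∀ (a : F) (x y y' : g), ψ₁ x (a • y + y') = a • ψ₁ x y + ψ₁ x y')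
    (hψ₁alt : ∀ x : g, ψ₁ x x = 0)
    (ς₁ : g → h)
    (hς₁smul : ∀ (a : F) (x : g), ς₁ (a • x) = a ^ 2 • ς₁ x)
    (hς₁add : ∀ x y : g, ς₁ (x + y) = ς₁ x + ς₁ y + ψ₁ x y)
    (τ₁ : g →ₗ[F] h)
    (hcoc₁₁ : ∀ x y z : g, ψ₁ x ⁅y, z⁆ + ψ₁ y ⁅z, x⁆ + ψ₁ z ⁅x, y⁆ = 0)
    (hcoc₁₂ : ∀ x y : g, ψ₁ (sq x) y + ψ₁ ⁅x, y⁆ x = 0)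
    (hcoc₁₃ : ∀ x y : g, τ₁ ⁅x, y⁆ + Dh (ψ₁ x y) + ψ₁ (Dg x) y + ψ₁ x (Dg y) = 0)
    (hcoc₁₄ : ∀ x : g, τ₁ (sq x) + Dh (ς₁ x) + ψ₁ x (Dg x) = 0)
    -- second 2-cocycle ((ψ₂,ς₂),τ₂)
    (ψ₂ : g → g → h)
    (hψ₂₁ : ∀ (a : F) (x x' y : g), ψ₂ (a • x + x') y = a • ψ₂ x y + ψ₂ x' y)
    (hψ₂₂ : ∀ (a : F) (x y y' : g), ψ₂ x (a • y + y') = a • ψ₂ x y + ψ₂ x y')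
    (hψ₂alt : ∀ x : g, ψ₂ x x = 0)
    (ς₂ : g → h)
    (hς₂smul : ∀ (a : F) (x : g), ς₂ (a • x) = a ^ 2 • ς₂ x)
    (hς₂add : ∀ x y : g, ς₂ (x + y) = ς₂ x + ς₂ y + ψ₂ x y)
    (τ₂ : g →ₗ[F] h)
    (hcoc₂₁ : ∀ x y z : g, ψ₂ x ⁅y, z⁆ + ψ₂ y ⁅z, x⁆ + ψ₂ z ⁅x, y⁆ = 0)
    (hcoc₂₂ : ∀ x y : g, ψ₂ (sq x) y + ψ₂ ⁅x, y⁆ x = 0)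
    (hcoc₂₃ : ∀ x y : g, τ₂ ⁅x, y⁆ + Dh (ψ₂ x y) + ψ₂ (Dg x) y + ψ₂ x (Dg y) = 0)
    (hcoc₂₄ : ∀ x : g, τ₂ (sq x) + Dh (ς₂ x) + ψ₂ x (Dg x) = 0)
    -- the two cocycles are cohomologous via ν
    (ν : g →ₗ[F] h)
    (hν₁ : ∀ x y : g, ψ₁ x y = ψ₂ x y + ν ⁅x, y⁆)
    (hν₂ : ∀ x : g, ς₁ x = ς₂ x + ν (sq x))
    (hν₃ : ∀ x : g, τ₁ x = τ₂ x + Dh (ν x) + ν (Dg x)) :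
    let br₁ : g × h → g × h → g × h := fun p q => (⁅p.1, q.1⁆, ψ₁ p.1 q.1)
    let sqς₁ : g × h → g × h := fun p => (sq p.1, ς₁ p.1)
    let Dτ₁ : g × h → g × h := fun p => (Dg p.1, τ₁ p.1 + Dh p.2)
    let br₂ : g × h → g × h → g × h := fun p q => (⁅p.1, q.1⁆, ψ₂ p.1 q.1)
    let sqς₂ : g × h → g × h := fun p => (sq p.1, ς₂ p.1)
    let Dτ₂ : g × h → g × h := fun p => (Dg p.1, τ₂ p.1 + Dh p.2)
    let ϱ : g × h → g × h := fun p => (p.1, ν p.1 + p.2)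
    -- ϱ is an isomorphism of ResLieDer pairs (an isomorphism of central extensions):
    Function.Bijective ϱ ∧
    (∀ p q : g × h, ϱ (p + q) = ϱ p + ϱ q) ∧
    (∀ (a : F) (p : g × h), ϱ (a • p) = a • ϱ p) ∧
    (∀ p q : g × h, ϱ (br₁ p q) = br₂ (ϱ p) (ϱ q)) ∧
    (∀ p : g × h, ϱ (sqς₁ p) = sqς₂ (ϱ p)) ∧
    (∀ p : g × h, ϱ (Dτ₁ p) = Dτ₂ (ϱ p)) ∧
    (∀ b : h, ϱ (0, b) = (0, b)) ∧
    (∀ p : g × h, (ϱ p).1 = p.1) := by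
  intro br₁ sqς₁ Dτ₁ br₂ sqς₂ Dτ₂ ϱ
  have two0 : ∀ a : h, a + a = 0 := fun a => by
    have h2 : (2 : F) = 0 := by
      have := CharP.cast_eq_zero F 2; exact_mod_cast this
    calc a + a = (2 : F) • a := (two_smul F a).symm
      _ = 0 := by rw [h2, zero_smul]
  refine ⟨?_, ?_, ?_, ?_, ?_, ?_, ?_, ?_⟩
  · refine Function.bijective_iff_has_inverse.mpr ⟨fun p => (p.1, p.2 - ν p.1), ?_, ?_⟩
    · intro p; simp [ϱ]
    · intro p; simp [ϱ]
  · intro p q; simp [ϱ, Prod.ext_iff]; abel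
  · intro a p; simp [ϱ, Prod.ext_iff, smul_add]
  · intro p q
    refine Prod.ext rfl ?_
    show ν ⁅p.1, q.1⁆ + ψ₁ p.1 q.1 = ψ₂ p.1 q.1
    rw [hν₁, add_comm (ψ₂ p.1 q.1), ← add_assoc, two0, zero_add]
  · intro p
    refine Prod.ext rfl ?_
    show ν (sq p.1) + ς₁ p.1 = ς₂ p.1
    rw [hν₂, add_comm (ς₂ p.1), ← add_assoc, two0, zero_add]
  · intro p
    refine Prod.ext rfl ?_
    show ν (Dg p.1) + (τ₁ p.1 + Dh p.2) = τ₂ p.1 + Dh (ν p.1 + p.2)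
    rw [hν₃, map_add]
    have e : ν (Dg p.1) + (τ₂ p.1 + Dh (ν p.1) + ν (Dg p.1) + Dh p.2) =
        (ν (Dg p.1) + ν (Dg p.1)) + (τ₂ p.1 + (Dh (ν p.1) + Dh p.2)) := by abel
    rw [e, two0, zero_add]
  · intro b; simp [ϱ]
  · intro p; rfl
end

section
/- Let θ : ĝ → g be a central extension of restricted Lie algebras over F with kernel h (so [h,ĝ] = 0 and u^[2]_ĝ = 0 for all u ∈ h), let D_g be a restricted derivation of (g,[2]_g), and let D_h : h → h be F-linear. For a section s of θ define ψ_s(x,y) = [s(x),s(y)] + s([x,y]), ς_s(x) = s(x)^[2]_ĝ + s(x^[2]_g), Ob_I^s(x,y) = D_h(ψ_s(x,y)) + ψ_s(D_g(x),y) + ψ_s(x,D_g(y)), and Ob_II^s(x) = D_h(ς_s(x)) + ψ_s(x,D_g(x)). Then for any two sections s₁, s₂ of θ, setting κ = s₁ − s₂ : g → h, one has for all x,y ∈ g: Ob_I^{s₁}(x,y) = Ob_I^{s₂}(x,y) + D_h(κ([x,y])) + κ(D_g([x,y])) and Ob_II^{s₁}(x) = Ob_II^{s₂}(x) + D_h(κ(x^[2]_g))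 + κ(D_g(x^[2]_g)). In particular the cohomology class of (Ob_I^s, Ob_II^s) in the second restricted cohomology of (g,[2]_g) with trivial coefficients in h does not depend on the choice of section. -/
/-- the obstruction 2-cocycles of a pair `(D_h, D_g)` associated with two
sections `s₁, s₂` of a central extension of restricted Lie algebras differ by the
2-coboundary of `D_h ∘ κ + κ ∘ D_g`, where `κ = s₁ - s₂`; hence the obstruction class
does not depend on the choice of section. -/
theorem stmt16
    {F : Type*} [Field F] [CharP F 2]
    {g : Type*} [LieRing g] [LieAlgebra F g]
    {gh : Type*} [LieRing gh] [LieAlgebra F gh]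
    -- restricted structure on g
    (sqg : g → g)
    (hsqg_ad : ∀ x y : g, ⁅sqg x, y⁆ = ⁅x, ⁅x, y⁆⁆)
    (hsqg_smul : ∀ (a : F) (x : g), sqg (a • x) = a ^ 2 • sqg x)
    (hsqg_add : ∀ x y : g, sqg (x + y) = sqg x + sqg y + ⁅x, y⁆)
    -- restricted structure on ĝ
    (sqgh : gh → gh)
    (hsqgh_ad : ∀ u v : gh, ⁅sqgh u, v⁆ = ⁅u, ⁅u, v⁆⁆)
    (hsqgh_smul : ∀ (a : F) (u : gh), sqgh (a • u) = a ^ 2 • sqgh u)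
    (hsqgh_add : ∀ u v : gh, sqgh (u + v) = sqgh u + sqgh v + ⁅u, v⁆)
    -- θ : ĝ → g is a central extension of restricted Lie algebras with kernel h
    (θ : gh →ₗ⁅F⁆ g)
    (hθsurj : Function.Surjective θ)
    (hθsq : ∀ u : gh, θ (sqgh u) = sqg (θ u))
    (hcentral : ∀ u : gh, θ u = 0 → ∀ v : gh, ⁅u, v⁆ = 0)
    (hker_sq : ∀ u : gh, θ u = 0 → sqgh u = 0)
    -- a restricted derivation of g
    (Dg : g →ₗ[F] g)
    (hDg_br : ∀ x y : g, Dg ⁅x, y⁆ = ⁅Dg x, y⁆ + ⁅x, Dg y⁆)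
    (hDg_sq : ∀ x : g, Dg (sqg x) = ⁅x, Dg x⁆)
    -- a linear map D_h : h → h on the kernel
    (Dh : gh →ₗ[F] gh)
    (hDh_ker : ∀ u : gh, θ u = 0 → θ (Dh u) = 0)
    -- two sections of θ
    (s₁ s₂ : g →ₗ[F] gh)
    (hs₁ : ∀ x : g, θ (s₁ x) = x)
    (hs₂ : ∀ x : g, θ (s₂ x) = x) :
    let ψ₁ : g → g → gh := fun x y => ⁅s₁ x, s₁ y⁆ + s₁ ⁅x, y⁆
    let ς₁ : g → gh := fun x => sqgh (s₁ x) + s₁ (sqg x)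
    let ObI₁ : g → g → gh := fun x y => Dh (ψ₁ x y) + ψ₁ (Dg x) y + ψ₁ x (Dg y)
    let ObII₁ : g → gh := fun x => Dh (ς₁ x) + ψ₁ x (Dg x)
    let ψ₂ : g → g → gh := fun x y => ⁅s₂ x, s₂ y⁆ + s₂ ⁅x, y⁆
    let ς₂ : g → gh := fun x => sqgh (s₂ x) + s₂ (sqg x)
    let ObI₂ : g → g → gh := fun x y => Dh (ψ₂ x y) + ψ₂ (Dg x) y + ψ₂ x (Dg y)
    let ObII₂ : g → gh := fun x => Dh (ς₂ x) + ψ₂ x (Dg x)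
    let κ : g →ₗ[F] gh := s₁ - s₂
    (∀ x y : g, ObI₁ x y = ObI₂ x y + Dh (κ ⁅x, y⁆) + κ (Dg ⁅x, y⁆)) ∧
    (∀ x : g, ObII₁ x = ObII₂ x + Dh (κ (sqg x)) + κ (Dg (sqg x))) := by
  intro ψ₁ ς₁ ObI₁ ObII₁ ψ₂ ς₂ ObI₂ ObII₂ κ
  have hκ : ∀ x : g, θ (κ x) = 0 := by
    intro x; simp [κ, hs₁, hs₂]
  have hκl : ∀ (x : g) (v : gh), ⁅κ x, v⁆ = 0 := fun x v => hcentral _ (hκ x) v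
  have hκr : ∀ (v : gh) (x : g), ⁅v, κ x⁆ = 0 := by
    intro v x
    rw [← lie_skew, hκl, neg_zero]
  have hs : ∀ x : g, s₁ x = s₂ x + κ x := by
    intro x; simp [κ]
  have hψ : ∀ x y : g, ψ₁ x y = ψ₂ x y + κ ⁅x, y⁆ := by
    intro x y
    simp only [ψ₁, ψ₂, hs, add_lie, lie_add, hκl, hκr, map_add]
    abel
  have hς : ∀ x : g, ς₁ x = ς₂ x + κ (sqg x) := by
    intro x
    simp only [ς₁, ς₂, hs, hsqgh_add, hker_sq (κ x) (hκ x), hκr, map_add, add_zero]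
    abel
  constructor
  · intro x y
    simp only [ObI₁, ObI₂, hψ, map_add]
    rw [show Dg ⁅x, y⁆ = ⁅Dg x, y⁆ + ⁅x, Dg y⁆ from hDg_br x y]
    simp only [map_add]
    abel
  · intro x
    simp only [ObII₁, ObII₂, hς, hψ, map_add]
    rw [show Dg (sqg x) = ⁅x, Dg x⁆ from hDg_sq x]
    abel
end
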